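/- arXiv:2602.09057 — 6 statements merged into one kernel-verified Lean document; each statement's English description precedes it below -/
import Mathlib

section
/- Let f : ℝ^m → ℝ be a nonnegative continuously differentiable function with f(θ*) = 0 at some point θ*, and suppose f is L-smooth on an open neighborhood U of θ* (i.e. ‖∇f(θ₁) − ∇f(θ₂)‖₂ ≤ L‖θ₁ − θ₂‖₂ for all θ₁, θ₂ ∈ U). Suppose there exist an open set V ⊆ U containing θ* and a constant μ > 0 such that the Polyak–Łojasiewicz inequality ‖∇f(θ)‖₂² ≥ 2μ f(θ) holds for all θ ∈ V. Then for every step size 0 < α ≤ 1/L with αμ ≤ 1 there exists an open neighborhood U_α ⊆ V of θ* such that for any initial point θ₀ ∈ U_α, the gradient descent iterates θ_{t+1} = θ_t − α∇f(θ_t) remain in V for all t ≥ 0 and satisfy f(θ_t) ≤ (1 − αμ)^t f(θ₀) for all t ≥ 0; in particular f(θ_t) → 0 at a linear rate. -/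
/-!
Since `θstar` minimizes `f`, `∇f θstar = 0`. Fix a closed ball of radius `r` about `θstar` inside
`V`. From a point of the half ball, a gradient step stays in the ball, where the sharp descent
lemma gives `f (x - α ∇f x) ≤ f x - α/2 ‖∇f x‖²`. With the PL inequality this multiplies `f` by at
most `ρ = 1 - αμ`, and with `f ≥ 0` the step has length at most `√(2α f x)`. Hence
`W x = dist x θstar + √(2α f x) / (1 - √ρ)` does not increase along the iteration (the step length
is paid for by the drop of the second term), so a trajectory starting in `{W < r/2}` stays in
the half ball.
-/

open Set Metric
open scoped Gradient RealInnerProductSpace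

section GradientStep

variable {E : Type*} [NormedAddCommGroup E] [InnerProductSpace ℝ E] [CompleteSpace E]
  {f : E → ℝ} {s : Set E} {L α μ : ℝ}

theorem IsLocalMin.gradient_eq_zero {a : E} (h : IsLocalMin f a) : ∇ f a = 0 := by
  simp [gradient, h.fderiv_eq_zero]

theorem image_add_le_of_lipschitzOn_gradient (hf : Differentiable ℝ f)
    (hLip : ∀ y ∈ s, ∀ z ∈ s, ‖∇ f y - ∇ f z‖ ≤ L * ‖y - z‖) {x v : E}
    (hseg : segment ℝ x (x + v) ⊆ s) :
    f (x + v) ≤ f x + ⟪∇ f x, v⟫ + L / 2 * ‖v‖ ^ 2 := by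
  have hmem : ∀ t ∈ Icc (0 : ℝ) 1, x + t • v ∈ s := fun t ht =>
    hseg (by rw [segment_eq_image']; exact ⟨t, ht, by rw [add_sub_cancel_left]⟩)
  have hderiv : ∀ t : ℝ, HasDerivAt (fun t => f (x + t • v) - f x - t * ⟪∇ f x, v⟫)
      (⟪∇ f (x + t • v), v⟫ - ⟪∇ f x, v⟫) t := fun t => by
    have hline : HasDerivAt (fun t : ℝ => x + t • v) v t := by
      simpa using ((hasDerivAt_id t).smul_const v).const_add x
    have hcomp := (hf (x + t • v)).hasFDerivAt.comp_hasDerivAt t hline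
    rw [← inner_gradient_left] at hcomp
    exact (hcomp.sub_const (f x)).sub (hasDerivAt_mul_const ⟪∇ f x, v⟫)
  have hB : ∀ t : ℝ, HasDerivAt (fun t => L / 2 * t ^ 2 * ‖v‖ ^ 2) (L * t * ‖v‖ ^ 2) t :=
    fun t => (((hasDerivAt_pow 2 t).const_mul (L / 2)).mul_const (‖v‖ ^ 2)).congr_deriv
      (by push_cast; ring)
  have hbound : ∀ t ∈ Ico (0 : ℝ) 1,
      ⟪∇ f (x + t • v), v⟫ - ⟪∇ f x, v⟫ ≤ L * t * ‖v‖ ^ 2 := fun t ht => by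
    have hLipt := hLip _ (hmem t (Ico_subset_Icc_self ht)) x (hseg (left_mem_segment ℝ x _))
    rw [add_sub_cancel_left, norm_smul, Real.norm_of_nonneg ht.1] at hLipt
    calc ⟪∇ f (x + t • v), v⟫ - ⟪∇ f x, v⟫ = ⟪∇ f (x + t • v) - ∇ f x, v⟫ :=
          (inner_sub_left _ _ _).symm
      _ ≤ ‖∇ f (x + t • v) - ∇ f x‖ * ‖v‖ := real_inner_le_norm _ _
      _ ≤ L * (t * ‖v‖) * ‖v‖ := by gcongr
      _ = L * t * ‖v‖ ^ 2 := by ring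
  have hcompare := image_le_of_deriv_right_le_deriv_boundary
    (fun t _ => (hderiv t).continuousAt.continuousWithinAt)
    (fun t _ => (hderiv t).hasDerivWithinAt) (by simp)
    (fun t _ => (hB t).continuousAt.continuousWithinAt)
    (fun t _ => (hB t).hasDerivWithinAt) hbound (right_mem_Icc.2 zero_le_one)
  simp only [one_smul, one_mul, one_pow, mul_one] at hcompare
  linarith

theorem image_sub_smul_gradient_le (hf : Differentiable ℝ f)
    (hLip : ∀ y ∈ s, ∀ z ∈ s, ‖∇ f y - ∇ f z‖ ≤ L * ‖y - z‖) {x : E}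
    (hα : 0 ≤ α) (hαL : α * L ≤ 1) (hseg : segment ℝ x (x - α • ∇ f x) ⊆ s) :
    f (x - α • ∇ f x) ≤ f x - α / 2 * ‖∇ f x‖ ^ 2 := by
  rw [sub_eq_add_neg] at hseg ⊢
  have h := image_add_le_of_lipschitzOn_gradient hf hLip hseg
  rw [inner_neg_right, real_inner_smul_right, real_inner_self_eq_norm_sq, norm_neg, norm_smul,
    Real.norm_of_nonneg hα] at h
  nlinarith [mul_le_mul_of_nonneg_right hαL (mul_nonneg hα (sq_nonneg ‖∇ f x‖))]

theorem segment_sub_smul_gradient_subset_closedBall {a x : E} {r : ℝ} (ha : ∇ f a = 0)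
    (hLip : ∀ y ∈ closedBall a r, ∀ z ∈ closedBall a r, ‖∇ f y - ∇ f z‖ ≤ L * ‖y - z‖)
    (hα : 0 ≤ α) (hαL : α * L ≤ 1) (hx : x ∈ closedBall a (r / 2)) :
    segment ℝ x (x - α • ∇ f x) ⊆ closedBall a r := by
  have hr : 0 ≤ r := by linarith [dist_nonneg.trans (mem_closedBall.1 hx)]
  have hxr : x ∈ closedBall a r := closedBall_subset_closedBall (half_le_self hr) hx
  have hstep : ‖α • ∇ f x‖ ≤ dist x a :=
    calc ‖α • ∇ f x‖ = α * ‖∇ f x - ∇ f a‖ := by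
          rw [ha, sub_zero, norm_smul, Real.norm_of_nonneg hα]
      _ ≤ α * (L * ‖x - a‖) := by gcongr; exact hLip x hxr a (mem_closedBall_self hr)
      _ = α * L * dist x a := by rw [dist_eq_norm, mul_assoc]
      _ ≤ dist x a := mul_le_of_le_one_left dist_nonneg hαL
  refine (convex_closedBall a r).segment_subset hxr (mem_closedBall.2 ?_)
  calc dist (x - α • ∇ f x) a ≤ dist x a + ‖α • ∇ f x‖ := by
        rw [dist_eq_norm, dist_eq_norm, sub_right_comm]; exact norm_sub_le _ _
    _ ≤ r := by linarith [mem_closedBall.1 hx]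

theorem gradient_step_of_polyakLojasiewicz (hf : Differentiable ℝ f)
    (hLip : ∀ y ∈ s, ∀ z ∈ s, ‖∇ f y - ∇ f z‖ ≤ L * ‖y - z‖) {x : E}
    (hα : 0 ≤ α) (hαL : α * L ≤ 1) (hseg : segment ℝ x (x - α • ∇ f x) ⊆ s)
    (hPL : 2 * μ * f x ≤ ‖∇ f x‖ ^ 2) (hnonneg : 0 ≤ f (x - α • ∇ f x)) :
    f (x - α • ∇ f x) ≤ (1 - α * μ) * f x ∧ dist (x - α • ∇ f x) x ^ 2 ≤ 2 * α * f x := by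
  have hdesc := image_sub_smul_gradient_le hf hLip hα hαL hseg
  have hdist : dist (x - α • ∇ f x) x = α * ‖∇ f x‖ := by
    rw [dist_eq_norm, sub_sub_cancel_left, norm_neg, norm_smul, Real.norm_of_nonneg hα]
  refine ⟨by nlinarith [mul_le_mul_of_nonneg_left hPL hα], ?_⟩
  rw [hdist]
  nlinarith [mul_le_mul_of_nonneg_left (sq_nonneg ‖∇ f x‖) hα]

end GradientStep

section Lyapunov

variable {X : Type*} [PseudoMetricSpace X] {f : X → ℝ} {a x y : X} {C ρ r : ℝ}

theorem mem_closedBall_of_dist_add_sqrt_div_le (hρ1 : ρ < 1)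
    (h : dist x a + √(C * f x) / (1 - √ρ) ≤ r) : x ∈ closedBall a r := by
  have hq : √ρ ≤ 1 := Real.sqrt_le_one.2 hρ1.le
  exact mem_closedBall.2 <|
    (le_add_of_nonneg_right (div_nonneg (Real.sqrt_nonneg _) (sub_nonneg.2 hq))).trans h

theorem dist_add_sqrt_div_le_of_step (hC : 0 ≤ C) (hρ0 : 0 ≤ ρ) (hρ1 : ρ < 1)
    (hfy : f y ≤ ρ * f x) (hdist : dist y x ^ 2 ≤ C * f x) :
    dist y a + √(C * f y) / (1 - √ρ) ≤ dist x a + √(C * f x) / (1 - √ρ) := by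
  have hq : √ρ < 1 := by simpa using Real.sqrt_lt_sqrt hρ0 hρ1
  have hstep : dist y x ≤ √(C * f x) := Real.le_sqrt_of_sq_le hdist
  have hdecay : √(C * f y) ≤ √ρ * √(C * f x) := by
    rw [← Real.sqrt_mul hρ0]
    exact Real.sqrt_le_sqrt (by linarith [mul_le_mul_of_nonneg_left hfy hC])
  calc dist y a + √(C * f y) / (1 - √ρ)
      ≤ dist x a + √(C * f x) + √ρ * √(C * f x) / (1 - √ρ) := by
        gcongr
        linarith [dist_triangle y x a]
    _ = dist x a + √(C * f x) / (1 - √ρ) := by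
        field_simp [(sub_pos.2 hq).ne']
        ring

theorem mem_closedBall_and_le_pow_mul_of_step {θ : ℕ → X} (hC : 0 ≤ C) (hρ0 : 0 ≤ ρ)
    (hρ1 : ρ < 1) (h0 : dist (θ 0) a + √(C * f (θ 0)) / (1 - √ρ) ≤ r)
    (hstep : ∀ t, θ t ∈ closedBall a r →
      f (θ (t + 1)) ≤ ρ * f (θ t) ∧ dist (θ (t + 1)) (θ t) ^ 2 ≤ C * f (θ t)) :
    ∀ t, θ t ∈ closedBall a r ∧ f (θ t) ≤ ρ ^ t * f (θ 0) := by
  suffices ∀ t, dist (θ t) a + √(C * f (θ t)) / (1 - √ρ) ≤ r ∧ f (θ t) ≤ ρ ^ t * f (θ 0) from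
    fun t => ⟨mem_closedBall_of_dist_add_sqrt_div_le hρ1 (this t).1, (this t).2⟩
  intro t
  induction t with
  | zero => simpa using h0
  | succ t ih =>
    obtain ⟨hf, hdist⟩ := hstep t (mem_closedBall_of_dist_add_sqrt_div_le hρ1 ih.1)
    refine ⟨(dist_add_sqrt_div_le_of_step hC hρ0 hρ1 hf hdist).trans ih.1, ?_⟩
    calc f (θ (t + 1)) ≤ ρ * f (θ t) := hf
      _ ≤ ρ * (ρ ^ t * f (θ 0)) := mul_le_mul_of_nonneg_left ih.2 hρ0
      _ = ρ ^ (t + 1) * f (θ 0) := by ring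

end Lyapunov

theorem gd_local_linear_convergence_general
    (m : ℕ) (f : EuclideanSpace ℝ (Fin m) → ℝ) (θstar : EuclideanSpace ℝ (Fin m))
    (L μ : ℝ) (U V : Set (EuclideanSpace ℝ (Fin m)))
    (hf_smooth : ContDiff ℝ 1 f)
    (hf_nonneg : ∀ θ, 0 ≤ f θ)
    (hf_zero : f θstar = 0)
    (hLip : ∀ θ₁ ∈ U, ∀ θ₂ ∈ U, ‖gradient f θ₁ - gradient f θ₂‖ ≤ L * ‖θ₁ - θ₂‖)
    (hV_open : IsOpen V) (hVU : V ⊆ U) (hθV : θstar ∈ V)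
    (hμ : 0 < μ)
    (hPL : ∀ θ ∈ V, ‖gradient f θ‖ ^ 2 ≥ 2 * μ * f θ)
    (α : ℝ) (hα_pos : 0 < α) (hα_le : α ≤ 1 / L) (hαμ : α * μ ≤ 1) :
    ∃ Uα : Set (EuclideanSpace ℝ (Fin m)), IsOpen Uα ∧ Uα ⊆ V ∧ θstar ∈ Uα ∧
      ∀ θ : ℕ → EuclideanSpace ℝ (Fin m), θ 0 ∈ Uα →
        (∀ t : ℕ, θ (t + 1) = θ t - α • gradient f (θ t)) →
        (∀ t : ℕ, θ t ∈ V) ∧ (∀ t : ℕ, f (θ t) ≤ (1 - α * μ) ^ t * f (θ 0)) := by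
  have hαL : α * L ≤ 1 := (le_div_iff₀ (one_div_pos.1 (hα_pos.trans_le hα_le))).1 hα_le
  have hf : Differentiable ℝ f := hf_smooth.differentiable one_ne_zero
  have hgrad : ∇ f θstar = 0 :=
    IsLocalMin.gradient_eq_zero (.of_forall fun θ => hf_zero ▸ hf_nonneg θ)
  obtain ⟨r, hr, hrV⟩ := nhds_basis_closedBall.mem_iff.1 (hV_open.mem_nhds hθV)
  have hLipr : ∀ y ∈ closedBall θstar r, ∀ z ∈ closedBall θstar r,
      ‖∇ f y - ∇ f z‖ ≤ L * ‖y - z‖ := fun y hy z hz => hLip y (hVU (hrV hy)) z (hVU (hrV hz))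
  have hhalfV : closedBall θstar (r / 2) ⊆ V :=
    (closedBall_subset_closedBall (half_le_self hr.le)).trans hrV
  have hρ0 : 0 ≤ 1 - α * μ := sub_nonneg.2 hαμ
  have hρ1 : 1 - α * μ < 1 := sub_lt_self _ (mul_pos hα_pos hμ)
  have hfc : Continuous f := hf.continuous
  refine ⟨{x | dist x θstar + √(2 * α * f x) / (1 - √(1 - α * μ)) < r / 2},
    isOpen_lt (by fun_prop) continuous_const,
    fun x hx => hhalfV (mem_closedBall_of_dist_add_sqrt_div_le hρ1 (le_of_lt hx)),
    by simpa [hf_zero] using half_pos hr, fun θ hθ0 hrec => ?_⟩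
  have horbit := mem_closedBall_and_le_pow_mul_of_step (by positivity) hρ0 hρ1 (le_of_lt hθ0)
    fun t ht => by
      rw [hrec t]
      exact gradient_step_of_polyakLojasiewicz hf hLipr hα_pos.le hαL
        (segment_sub_smul_gradient_subset_closedBall hgrad hLipr hα_pos.le hαL ht)
        (hPL _ (hhalfV ht)) (hf_nonneg _)
  exact ⟨fun t => hhalfV (horbit t).1, fun t => (horbit t).2⟩

/-- **Local linear convergence of gradient descent near a regular equilibrium.**
If `f : ℝ^m → ℝ` is a nonnegative `C¹` function vanishing at `θ*`, is `L`-smooth on an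
open neighborhood `U` of `θ*`, and satisfies the Polyak–Łojasiewicz inequality
`‖∇f(θ)‖² ≥ 2 μ f(θ)` on an open set `V ⊆ U` containing `θ*`, then for every step size
`0 < α ≤ 1/L` with `α μ ≤ 1` there is an open neighborhood `U_α ⊆ V` of `θ*` such that all
gradient descent trajectories started in `U_α` stay in `V` and satisfy
`f(θ_t) ≤ (1 - α μ)^t f(θ₀)`. -/
theorem gd_local_linear_convergence
    (m : ℕ) (f : EuclideanSpace ℝ (Fin m) → ℝ) (θstar : EuclideanSpace ℝ (Fin m))
    (L μ : ℝ) (U V : Set (EuclideanSpace ℝ (Fin m)))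
    (hf_smooth : ContDiff ℝ 1 f)
    (hf_nonneg : ∀ θ, 0 ≤ f θ)
    (hf_zero : f θstar = 0)
    (hU_open : IsOpen U) (hθU : θstar ∈ U)
    (hL : 0 < L)
    (hLip : ∀ θ₁ ∈ U, ∀ θ₂ ∈ U, ‖gradient f θ₁ - gradient f θ₂‖ ≤ L * ‖θ₁ - θ₂‖)
    (hV_open : IsOpen V) (hVU : V ⊆ U) (hθV : θstar ∈ V)
    (hμ : 0 < μ)
    (hPL : ∀ θ ∈ V, ‖gradient f θ‖ ^ 2 ≥ 2 * μ * f θ)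
    (α : ℝ) (hα_pos : 0 < α) (hα_le : α ≤ 1 / L) (hαμ : α * μ ≤ 1) :
    ∃ Uα : Set (EuclideanSpace ℝ (Fin m)), IsOpen Uα ∧ Uα ⊆ V ∧ θstar ∈ Uα ∧
      ∀ θ : ℕ → EuclideanSpace ℝ (Fin m), θ 0 ∈ Uα →
        (∀ t : ℕ, θ (t + 1) = θ t - α • gradient f (θ t)) →
        (∀ t : ℕ, θ t ∈ V) ∧ (∀ t : ℕ, f (θ t) ≤ (1 - α * μ) ^ t * f (θ 0)) :=
  gd_local_linear_convergence_general m f θstar L μ U V hf_smooth hf_nonneg hf_zero hLip hV_open hVU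
    hθV hμ hPL α hα_pos hα_le hαμ
end

section
/- Let F : ℝ^m → ℝ^n be twice continuously differentiable with F(θ*) = 0, and set f(θ) = (1/2)‖F(θ)‖₂². Let W be a precompact open neighborhood of θ* and let 0 < σ_min ≤ σ_max be such that every nonzero singular value of the Jacobian J_F(θ) lies in [σ_min, σ_max] for all θ ∈ W, with J_F of constant rank r on W. Let L_J be a Lipschitz constant of θ ↦ J_F(θ) on W (in spectral norm), and let C_⊥ > 0 be such that ‖P_{range(J_F(θ))^⊥} F(θ)‖₂ ≤ C_⊥ ‖F(θ)‖₂² for all θ ∈ W, where P_{range(J_F(θ))^⊥} is the orthogonal projection onto the orthogonal complement of the column space of J_F(θ). Fix a step size 0 < α ≤ 1/σ_max and assume (C_⊥ + L_J α²/2)‖F(θ)‖₂ ≤ α σ_min / 2 for all θ ∈ W. Then there exists an open neighborhood U_α ⊆ W of θ* such that for any initial point θ₀ ∈ U_α, the SPGD iterates θ_{t+1} = θ_t − α V_t U_tᵀ F(θ_t), where J_F(θ_t) = U_t Σ_t V_tᵀ is the rank-r economy singular value decomposition of J_F(θ_t), remain in W for all t ≥ 0 and satisfy ‖F(θ_t)‖₂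 ≤ (1 − α σ_min/2)^t ‖F(θ₀)‖₂ for all t ≥ 0; consequently f(θ_t) ≤ (1 − α σ_min/2)^t f(θ₀). -/
open Matrix
open scoped Matrix.Norms.L2Operator

noncomputable def mulVecCLM {n m : ℕ} (M : Matrix (Fin n) (Fin m) ℝ) :
    EuclideanSpace ℝ (Fin m) →L[ℝ] EuclideanSpace ℝ (Fin n) :=
  LinearMap.toContinuousLinearMap (Matrix.toEuclideanLin M)

/-!
Write `J_F(θ) = U Σ Vᵀ` and `w = F(θ)`. Since `J_F V Uᵀ = U Σ Uᵀ`, the linearised SPGD step sends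
`w` to `(w - U Uᵀ w) + U (1 - α Σ) Uᵀ w`. The first summand is the component of `w` orthogonal to
`range J_F`, of norm at most `C⊥ ‖w‖²`; the second has norm at most `(1 - α σ_min) ‖w‖`. The step
has length at most `α ‖w‖`, so the Taylor remainder of `F` along it is at most `L_J α² ‖w‖² / 2`,
and the smallness assumption turns the sum into `‖F(θ⁺)‖ ≤ κ ‖F(θ)‖` with `κ = 1 - α σ_min / 2`,
as long as `θ` and `θ⁺` lie in a ball inside `W`.

Steps of length at most `α ‖F‖` combined with this contraction make
`θ ↦ dist θ θ* + α ‖F θ‖ / (1 - κ)` non-increasing along the iteration, so its sublevel set below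
the radius of the ball is an open invariant neighbourhood of `θ*`.
When `r = 0` or `L_J < 0` the map `F` vanishes near `θ*`, and the iteration is stationary there.
-/

open Set Metric

theorem norm_sub_sub_fderiv_le_of_lipschitzOn {E G : Type*} [NormedAddCommGroup E]
    [NormedSpace ℝ E] [NormedAddCommGroup G] [NormedSpace ℝ G] {f : E → G}
    {f' : E → E →L[ℝ] G} {s : Set E} {x y : E} {L : ℝ}
    (hf : ∀ z ∈ s, HasFDerivAt f (f' z) z) (hs : Convex ℝ s) (hx : x ∈ s) (hy : y ∈ s)
    (hLip : ∀ z ∈ s, ‖f' z - f' x‖ ≤ L * ‖z - x‖) :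
    ‖f y - f x - f' x (y - x)‖ ≤ L / 2 * ‖y - x‖ ^ 2 := by
  set d := y - x
  have hseg : ∀ t ∈ Icc (0 : ℝ) 1, x + t • d ∈ s := fun t ht => hs.add_smul_sub_mem hx hy ht
  have hderiv : ∀ t ∈ Icc (0 : ℝ) 1, HasDerivAt (fun t : ℝ => f (x + t • d) - f x - t • f' x d)
      (f' (x + t • d) d - f' x d) t := fun t ht => by
    have hline : HasDerivAt (fun t : ℝ => x + t • d) d t := by
      simpa using ((hasDerivAt_id t).smul_const d).const_add x
    exact (((hf _ (hseg t ht)).comp_hasDerivAt t hline).sub_const (f x)).sub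
      (by simpa using (hasDerivAt_id t).smul_const (f' x d))
  have hbound : ∀ t ∈ Ico (0 : ℝ) 1, ‖f' (x + t • d) d - f' x d‖ ≤ L * ‖d‖ ^ 2 * t := by
    intro t ht
    calc ‖f' (x + t • d) d - f' x d‖ = ‖(f' (x + t • d) - f' x) d‖ := rfl
      _ ≤ ‖f' (x + t • d) - f' x‖ * ‖d‖ := ContinuousLinearMap.le_opNorm _ _
      _ ≤ L * ‖(x + t • d) - x‖ * ‖d‖ := by
        gcongr; exact hLip _ (hseg t (Ico_subset_Icc_self ht))
      _ = L * ‖d‖ ^ 2 * t := by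
        rw [add_sub_cancel_left, norm_smul, Real.norm_of_nonneg ht.1]; ring
  have hB : ∀ t : ℝ, HasDerivAt (fun t => L * ‖d‖ ^ 2 / 2 * t ^ 2) (L * ‖d‖ ^ 2 * t) t :=
    fun t => ((hasDerivAt_pow 2 t).const_mul _).congr_deriv (by push_cast; ring)
  have := image_norm_le_of_norm_deriv_right_le_deriv_boundary
    (f := fun t : ℝ => f (x + t • d) - f x - t • f' x d) (a := 0) (b := 1)
    (fun t ht => (hderiv t ht).continuousAt.continuousWithinAt)
    (fun t ht => (hderiv t (Ico_subset_Icc_self ht)).hasDerivWithinAt) (by simp) hB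
    hbound (right_mem_Icc.2 zero_le_one)
  simpa [d, mul_div_right_comm] using this

theorem apply_eq_of_hasFDerivAt_zero_on_ball {E G : Type*} [NormedAddCommGroup E]
    [NormedSpace ℝ E] [NormedAddCommGroup G] [NormedSpace ℝ G] {f : E → G} {c x : E} {ρ : ℝ}
    (hf : ∀ z ∈ ball c ρ, HasFDerivAt f (0 : E →L[ℝ] G) z) (hx : x ∈ ball c ρ) : f x = f c :=
  isOpen_ball.is_const_of_fderiv_eq_zero (𝕜 := ℝ) (convex_ball c ρ).isPreconnected
    (fun z hz => (hf z hz).differentiableAt.differentiableWithinAt)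
    (fun z hz => (hf z hz).fderiv) hx (mem_ball_self (pos_of_mem_ball hx))

theorem eq_of_norm_le_mul_norm_sub {E G : Type*} [NormedAddCommGroup E] [SeminormedAddGroup G]
    {a : G} {x y : E} {L : ℝ} (hL : L < 0) (h : ‖a‖ ≤ L * ‖x - y‖) : x = y := by
  have : ‖x - y‖ ≤ 0 := by nlinarith [norm_nonneg a, norm_nonneg (x - y)]
  exact sub_eq_zero.1 (norm_le_zero_iff.1 this)

theorem sq_le_mul_sq_of_le_mul {a b k : ℝ} (ha : 0 ≤ a) (hk0 : 0 ≤ k) (hk1 : k ≤ 1)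
    (h : a ≤ k * b) : a ^ 2 ≤ k * b ^ 2 := by
  nlinarith [mul_le_mul_of_nonneg_left hk1 (mul_nonneg hk0 (sq_nonneg b))]

section EuclideanMatrix

variable {l m n : Type*}

theorem toEuclideanLin_mul_apply [Fintype m] [DecidableEq m] [Fintype n] [DecidableEq n]
    (A : Matrix l m ℝ) (B : Matrix m n ℝ) (x : EuclideanSpace ℝ n) :
    toEuclideanLin (A * B) x = toEuclideanLin A (toEuclideanLin B x) := by
  simp

theorem norm_toEuclideanLin_apply_le [Fintype m] [Fintype n] [DecidableEq n]
    (A : Matrix m n ℝ) (x : EuclideanSpace ℝ n) :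
    ‖toEuclideanLin A x‖ ≤ ‖A‖ * ‖x‖ :=
  (LinearMap.toContinuousLinearMap (toEuclideanLin A)).le_opNorm x

theorem l2_opNorm_transpose [Fintype m] [DecidableEq m] [Fintype n] [DecidableEq n]
    (A : Matrix m n ℝ) : ‖Aᵀ‖ = ‖A‖ := by
  rw [← conjTranspose_eq_transpose_of_trivial, l2_opNorm_conjTranspose]

theorem inner_toEuclideanLin_left [Fintype m] [DecidableEq m] [Fintype n] [DecidableEq n]
    (A : Matrix m n ℝ) (x : EuclideanSpace ℝ n) (y : EuclideanSpace ℝ m) :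
    inner ℝ (toEuclideanLin A x) y = inner ℝ x (toEuclideanLin Aᵀ y) := by
  rw [← conjTranspose_eq_transpose_of_trivial, toEuclideanLin_conjTranspose_eq_adjoint,
    LinearMap.adjoint_inner_right]

theorem norm_le_one_of_transpose_mul_self_eq_one [Fintype m] [Fintype n] [DecidableEq n]
    {U : Matrix m n ℝ} (hU : Uᵀ * U = 1) : ‖U‖ ≤ 1 := by
  have h : ‖U‖ * ‖U‖ ≤ 1 := by
    rw [← l2_opNorm_conjTranspose_mul_self, conjTranspose_eq_transpose_of_trivial, hU,
      ← diagonal_one, l2_opNorm_diagonal]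
    exact (pi_norm_le_iff_of_nonneg zero_le_one).2 fun _ => by simp
  nlinarith [norm_nonneg U]

theorem range_toEuclideanLin_mul_of_mul_eq_one [Fintype m] [DecidableEq m] [Fintype n]
    [DecidableEq n] {A : Matrix l m ℝ} {B : Matrix m n ℝ} {C : Matrix n m ℝ} (hBC : B * C = 1) :
    LinearMap.range (toEuclideanLin (A * B)) = LinearMap.range (toEuclideanLin A) := by
  refine le_antisymm ?_ ?_
  · rintro _ ⟨x, rfl⟩
    exact ⟨_, (toEuclideanLin_mul_apply A B x).symm⟩
  · rintro _ ⟨x, rfl⟩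
    refine ⟨toEuclideanLin C x, ?_⟩
    rw [← toEuclideanLin_mul_apply, Matrix.mul_assoc, hBC, Matrix.mul_one]

theorem starProjection_range_toEuclideanLin [Fintype m] [DecidableEq m] [Fintype n]
    [DecidableEq n] {U : Matrix m n ℝ} (hU : Uᵀ * U = 1) (w : EuclideanSpace ℝ m) :
    (LinearMap.range (toEuclideanLin U)).starProjection w = toEuclideanLin (U * Uᵀ) w := by
  refine Submodule.eq_starProjection_of_mem_of_inner_eq_zero
    ⟨toEuclideanLin Uᵀ w, (toEuclideanLin_mul_apply _ _ _).symm⟩ ?_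
  rintro _ ⟨z, rfl⟩
  rw [real_inner_comm, inner_toEuclideanLin_left, map_sub, ← toEuclideanLin_mul_apply,
    ← Matrix.mul_assoc, hU, Matrix.one_mul, sub_self, inner_zero_right]

theorem norm_sub_smul_svd_le {r : Type*} [Fintype m] [DecidableEq m] [Fintype n]
    [DecidableEq n] [Fintype r] [DecidableEq r] {U : Matrix n r ℝ} {V : Matrix m r ℝ}
    {σ : r → ℝ} {α σmin σmax : ℝ} (hU : Uᵀ * U = 1) (hV : Vᵀ * V = 1)
    (hσ : ∀ i, σmin ≤ σ i ∧ σ i ≤ σmax) (hσmin : 0 < σmin) (hσminmax : σmin ≤ σmax)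
    (hα : 0 ≤ α) (hασ : α * σmax ≤ 1) (w : EuclideanSpace ℝ n) :
    ‖w - α • toEuclideanLin (U * diagonal σ * Vᵀ) (toEuclideanLin (V * Uᵀ) w)‖ ≤
      (1 - α * σmin) * ‖w‖ +
        ‖(LinearMap.range (toEuclideanLin (U * diagonal σ * Vᵀ)))ᗮ.starProjection w‖ := by
  set D : Matrix r r ℝ := diagonal fun i => 1 - α * σ i
  have hsplit : w - α • toEuclideanLin (U * diagonal σ * Vᵀ) (toEuclideanLin (V * Uᵀ) w) =
      toEuclideanLin (U * D * Uᵀ) w + (w - toEuclideanLin (U * Uᵀ) w) := by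
    have hD : D = 1 - α • diagonal σ := by
      ext i j
      rcases eq_or_ne i j with rfl | h <;> simp [D, *]
    have hJVU : U * diagonal σ * Vᵀ * (V * Uᵀ) = U * diagonal σ * Uᵀ := by
      rw [Matrix.mul_assoc, ← Matrix.mul_assoc Vᵀ, hV, Matrix.one_mul, Matrix.mul_assoc]
    rw [← toEuclideanLin_mul_apply, hJVU, hD, Matrix.mul_sub, Matrix.sub_mul, Matrix.mul_one,
      Matrix.mul_smul, Matrix.smul_mul, map_sub, map_smul, LinearMap.sub_apply,
      LinearMap.smul_apply]
    abel
  have hrange : LinearMap.range (toEuclideanLin (U * diagonal σ * Vᵀ)) =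
      LinearMap.range (toEuclideanLin U) := by
    rw [Matrix.mul_assoc]
    refine range_toEuclideanLin_mul_of_mul_eq_one (C := V * diagonal fun i => (σ i)⁻¹) ?_
    rw [Matrix.mul_assoc, ← Matrix.mul_assoc Vᵀ, hV, Matrix.one_mul, diagonal_mul_diagonal,
      ← diagonal_one]
    exact congrArg diagonal (funext fun i => mul_inv_cancel₀ (hσmin.trans_le (hσ i).1).ne')
  have hD : ‖D‖ ≤ 1 - α * σmin := by
    rw [l2_opNorm_diagonal, pi_norm_le_iff_of_nonneg (by nlinarith)]
    intro i
    rw [Real.norm_eq_abs, abs_le]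
    constructor <;> nlinarith [hσ i]
  have hU1 := norm_le_one_of_transpose_mul_self_eq_one hU
  have hUDU : ‖U * D * Uᵀ‖ ≤ 1 - α * σmin :=
    calc ‖U * D * Uᵀ‖ ≤ ‖U‖ * ‖D‖ * ‖Uᵀ‖ :=
          (l2_opNorm_mul _ _).trans (by gcongr; exact l2_opNorm_mul _ _)
      _ ≤ 1 * (1 - α * σmin) * 1 := by
          rw [l2_opNorm_transpose]
          gcongr
          nlinarith
      _ = 1 - α * σmin := by ring
  simp only [hsplit, hrange]
  rw [Submodule.starProjection_orthogonal_val, starProjection_range_toEuclideanLin hU]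
  calc _ ≤ ‖toEuclideanLin (U * D * Uᵀ) w‖ + ‖w - toEuclideanLin (U * Uᵀ) w‖ := norm_add_le _ _
    _ ≤ (1 - α * σmin) * ‖w‖ + ‖w - toEuclideanLin (U * Uᵀ) w‖ := by
        gcongr
        exact (norm_toEuclideanLin_apply_le _ w).trans (by gcongr)

end EuclideanMatrix

section Orbit

variable {X : Type*} [PseudoMetricSpace X] {T : X → X} {g : X → ℝ} {c : X} {ρ κ a : ℝ}

theorem mapsTo_setOf_dist_add_div_lt (hg : ∀ x, 0 ≤ g x) (ha : 0 ≤ a) (hκ0 : 0 ≤ κ)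
    (hκ1 : κ < 1) (hstep : ∀ x ∈ ball c ρ, dist (T x) x ≤ a * g x)
    (hcontr : ∀ x ∈ ball c ρ, T x ∈ ball c ρ → g (T x) ≤ κ * g x) :
    MapsTo T {x | dist x c + a * g x / (1 - κ) < ρ} {x | dist x c + a * g x / (1 - κ) < ρ} := by
  intro x (hx : dist x c + a * g x / (1 - κ) < ρ)
  have h1κ : 0 < 1 - κ := sub_pos.2 hκ1
  have hgx : a * g x ≤ a * g x / (1 - κ) :=
    le_div_self (mul_nonneg ha (hg x)) h1κ (by linarith)
  have hx_ball : x ∈ ball c ρ :=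
    (le_add_of_nonneg_right (div_nonneg (mul_nonneg ha (hg x)) h1κ.le)).trans_lt hx
  have hTx_dist : dist (T x) c ≤ dist x c + a * g x :=
    (dist_triangle _ x _).trans (by linarith [hstep x hx_ball])
  have hTx_ball : T x ∈ ball c ρ := by
    rw [mem_ball]; linarith
  have hgTx : a * g (T x) / (1 - κ) ≤ a * (κ * g x) / (1 - κ) := by
    gcongr; exact hcontr x hx_ball hTx_ball
  have hsum : a * g x + a * (κ * g x) / (1 - κ) = a * g x / (1 - κ) := by
    field_simp; ring
  show dist (T x) c + a * g (T x) / (1 - κ) < ρ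
  linarith

theorem exists_isOpen_orbit_mem_ball_le_pow_mul (hgc : Continuous g) (hg : ∀ x, 0 ≤ g x)
    (hg0 : g c = 0) (hρ : 0 < ρ) (ha : 0 ≤ a) (hκ0 : 0 ≤ κ) (hκ1 : κ < 1)
    (hstep : ∀ x ∈ ball c ρ, dist (T x) x ≤ a * g x)
    (hcontr : ∀ x ∈ ball c ρ, T x ∈ ball c ρ → g (T x) ≤ κ * g x) :
    ∃ U, IsOpen U ∧ U ⊆ ball c ρ ∧ c ∈ U ∧ ∀ θ : ℕ → X, θ 0 ∈ U →
      (∀ t, θ (t + 1) = T (θ t)) → ∀ t, θ t ∈ ball c ρ ∧ g (θ t) ≤ κ ^ t * g (θ 0) := by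
  set S := {x | dist x c + a * g x / (1 - κ) < ρ}
  have hS : S ⊆ ball c ρ := fun x hx =>
    (le_add_of_nonneg_right (div_nonneg (mul_nonneg ha (hg x)) (by linarith))).trans_lt hx
  refine ⟨S, isOpen_lt (by fun_prop) continuous_const, hS, by simpa [S, hg0] using hρ,
    fun θ h0 hθ => ?_⟩
  have hmem : ∀ t, θ t ∈ S := fun t => by
    induction t with
    | zero => exact h0
    | succ t ih => rw [hθ]; exact mapsTo_setOf_dist_add_div_lt hg ha hκ0 hκ1 hstep hcontr ih
  refine fun t => ⟨hS (hmem t), ?_⟩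
  induction t with
  | zero => simp
  | succ t ih =>
    calc g (θ (t + 1)) ≤ κ * g (θ t) := by
          rw [hθ]; exact hcontr _ (hS (hmem t)) (hθ t ▸ hS (hmem (t + 1)))
      _ ≤ κ * (κ ^ t * g (θ 0)) := by gcongr
      _ = κ ^ (t + 1) * g (θ 0) := by ring

end Orbit

section SPGD

variable {m n : ℕ} {r : Type*} [Fintype r]

theorem norm_mulVecCLM (A : Matrix (Fin n) (Fin m) ℝ) : ‖mulVecCLM A‖ = ‖A‖ := rfl

theorem mulVecCLM_sub (A B : Matrix (Fin n) (Fin m) ℝ) :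
    mulVecCLM (A - B) = mulVecCLM A - mulVecCLM B := by
  simp only [mulVecCLM, map_sub]

noncomputable def spgdStep (F : EuclideanSpace ℝ (Fin m) → EuclideanSpace ℝ (Fin n))
    (U : Matrix (Fin n) r ℝ) (V : Matrix (Fin m) r ℝ) (α : ℝ) (x : EuclideanSpace ℝ (Fin m)) :
    EuclideanSpace ℝ (Fin m) :=
  x - α • toEuclideanLin (V * Uᵀ) (F x)

theorem norm_spgdStep_sub_le [DecidableEq r]
    {F : EuclideanSpace ℝ (Fin m) → EuclideanSpace ℝ (Fin n)}
    {U : Matrix (Fin n) r ℝ} {V : Matrix (Fin m) r ℝ} {α : ℝ} (hU : Uᵀ * U = 1)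
    (hV : Vᵀ * V = 1) (hα : 0 ≤ α) (x : EuclideanSpace ℝ (Fin m)) :
    ‖spgdStep F U V α x - x‖ ≤ α * ‖F x‖ := by
  have hVU : ‖V * Uᵀ‖ ≤ 1 :=
    calc ‖V * Uᵀ‖ ≤ ‖V‖ * ‖Uᵀ‖ := l2_opNorm_mul _ _
      _ ≤ 1 * 1 := by
        rw [l2_opNorm_transpose]
        gcongr
        · exact norm_le_one_of_transpose_mul_self_eq_one hV
        · exact norm_le_one_of_transpose_mul_self_eq_one hU
      _ = 1 := one_mul 1
  rw [spgdStep, sub_sub_cancel_left, norm_neg, norm_smul, Real.norm_of_nonneg hα]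
  gcongr
  exact (norm_toEuclideanLin_apply_le _ _).trans (by nlinarith [norm_nonneg (F x)])

theorem spgd_orbit_eq_of_eqOn_zero {F : EuclideanSpace ℝ (Fin m) → EuclideanSpace ℝ (Fin n)}
    {U : EuclideanSpace ℝ (Fin m) → Matrix (Fin n) r ℝ}
    {V : EuclideanSpace ℝ (Fin m) → Matrix (Fin m) r ℝ} {α : ℝ}
    {S : Set (EuclideanSpace ℝ (Fin m))} (hF : ∀ x ∈ S, F x = 0) {θ : ℕ → EuclideanSpace ℝ (Fin m)}
    (h0 : θ 0 ∈ S) (hθ : ∀ t, θ (t + 1) = spgdStep F (U (θ t)) (V (θ t)) α (θ t)) (t : ℕ) :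
    θ t = θ 0 := by
  induction t with
  | zero => rfl
  | succ t ih => rw [hθ, ih, spgdStep, hF _ h0, map_zero, smul_zero, sub_zero]

theorem norm_apply_spgdStep_le [DecidableEq r]
    {F : EuclideanSpace ℝ (Fin m) → EuclideanSpace ℝ (Fin n)}
    {J : EuclideanSpace ℝ (Fin m) → Matrix (Fin n) (Fin m) ℝ} {U : Matrix (Fin n) r ℝ}
    {V : Matrix (Fin m) r ℝ} {σ : r → ℝ} {s : Set (EuclideanSpace ℝ (Fin m))}
    {x : EuclideanSpace ℝ (Fin m)} {σmin σmax L C α : ℝ}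
    (hJ : ∀ z ∈ s, HasFDerivAt F (mulVecCLM (J z)) z) (hs : Convex ℝ s) (hx : x ∈ s)
    (hx' : spgdStep F U V α x ∈ s) (hSVD : J x = U * diagonal σ * Vᵀ) (hU : Uᵀ * U = 1)
    (hV : Vᵀ * V = 1) (hσ : ∀ i, σmin ≤ σ i ∧ σ i ≤ σmax) (hσmin : 0 < σmin)
    (hσminmax : σmin ≤ σmax) (hα : 0 ≤ α) (hασ : α * σmax ≤ 1) (hL : 0 ≤ L)
    (hLip : ∀ z ∈ s, ‖J z - J x‖ ≤ L * ‖z - x‖)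
    (hperp : ‖(LinearMap.range (toEuclideanLin (J x)))ᗮ.starProjection (F x)‖ ≤ C * ‖F x‖ ^ 2)
    (hsmall : (C + L * α ^ 2 / 2) * ‖F x‖ ≤ α * σmin / 2) :
    ‖F (spgdStep F U V α x)‖ ≤ (1 - α * σmin / 2) * ‖F x‖ := by
  set x' := spgdStep F U V α x
  have htaylor : ‖F x' - F x - mulVecCLM (J x) (x' - x)‖ ≤ L / 2 * ‖x' - x‖ ^ 2 :=
    norm_sub_sub_fderiv_le_of_lipschitzOn hJ hs hx hx' fun z hz => by
      rw [← mulVecCLM_sub, norm_mulVecCLM]; exact hLip z hz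
  have hlinear : ‖F x + mulVecCLM (J x) (x' - x)‖ ≤ (1 - α * σmin) * ‖F x‖ + C * ‖F x‖ ^ 2 := by
    have hx'x : x' - x = -(α • toEuclideanLin (V * Uᵀ) (F x)) := sub_sub_cancel_left _ _
    have := norm_sub_smul_svd_le hU hV hσ hσmin hσminmax hα hασ (F x)
    rw [← hSVD] at this
    rw [hx'x, map_neg, map_smul, ← sub_eq_add_neg]
    exact this.trans (by gcongr)
  have hstep : ‖x' - x‖ ≤ α * ‖F x‖ := norm_spgdStep_sub_le hU hV hα x
  calc ‖F x'‖
      = ‖(F x + mulVecCLM (J x) (x' - x)) + (F x' - F x - mulVecCLM (J x) (x' - x))‖ := by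
        congr 1; abel
    _ ≤ ‖F x + mulVecCLM (J x) (x' - x)‖ + ‖F x' - F x - mulVecCLM (J x) (x' - x)‖ :=
        norm_add_le _ _
    _ ≤ (1 - α * σmin) * ‖F x‖ + C * ‖F x‖ ^ 2 + L / 2 * (α * ‖F x‖) ^ 2 := by
        gcongr
        exact htaylor.trans (by gcongr)
    _ ≤ (1 - α * σmin / 2) * ‖F x‖ := by
        nlinarith [mul_le_mul_of_nonneg_left hsmall (norm_nonneg (F x))]

end SPGD

theorem spgd_local_linear_convergence_general
    (n m r : ℕ) (F : EuclideanSpace ℝ (Fin m) → EuclideanSpace ℝ (Fin n))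
    (θstar : EuclideanSpace ℝ (Fin m))
    (J : EuclideanSpace ℝ (Fin m) → Matrix (Fin n) (Fin m) ℝ)
    (Usvd : EuclideanSpace ℝ (Fin m) → Matrix (Fin n) (Fin r) ℝ)
    (Vsvd : EuclideanSpace ℝ (Fin m) → Matrix (Fin m) (Fin r) ℝ)
    (σ : EuclideanSpace ℝ (Fin m) → Fin r → ℝ)
    (W : Set (EuclideanSpace ℝ (Fin m))) (σmin σmax L_J Cperp α : ℝ)
    (hFzero : F θstar = 0)
    (hW_open : IsOpen W) (hθW : θstar ∈ W)
    (hJ : ∀ θ, HasFDerivAt F (mulVecCLM (J θ)) θ)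
    (hSVD : ∀ θ ∈ W, J θ = Usvd θ * Matrix.diagonal (σ θ) * (Vsvd θ)ᵀ)
    (hU : ∀ θ ∈ W, (Usvd θ)ᵀ * Usvd θ = 1) (hV : ∀ θ ∈ W, (Vsvd θ)ᵀ * Vsvd θ = 1)
    (hσmin : 0 < σmin) (hσ : ∀ θ ∈ W, ∀ i, σmin ≤ σ θ i ∧ σ θ i ≤ σmax)
    (hLip : ∀ θ₁ ∈ W, ∀ θ₂ ∈ W, ‖J θ₁ - J θ₂‖ ≤ L_J * ‖θ₁ - θ₂‖)
    (hperp : ∀ θ ∈ W,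
      ‖(Submodule.orthogonalProjectionOnto (LinearMap.range (Matrix.toEuclideanLin (J θ)))ᗮ (F θ) :
          EuclideanSpace ℝ (Fin n))‖ ≤ Cperp * ‖F θ‖ ^ 2)
    (hα_pos : 0 < α) (hα_le : α ≤ 1 / σmax)
    (hsmall : ∀ θ ∈ W, (Cperp + L_J * α ^ 2 / 2) * ‖F θ‖ ≤ α * σmin / 2) :
    ∃ Uα : Set (EuclideanSpace ℝ (Fin m)), IsOpen Uα ∧ Uα ⊆ W ∧ θstar ∈ Uα ∧
      ∀ θ : ℕ → EuclideanSpace ℝ (Fin m), θ 0 ∈ Uα →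
        (∀ t : ℕ, θ (t + 1) =
          θ t - α • Matrix.toEuclideanLin (Vsvd (θ t) * (Usvd (θ t))ᵀ) (F (θ t))) →
        (∀ t : ℕ, θ t ∈ W) ∧
        (∀ t : ℕ, ‖F (θ t)‖ ≤ (1 - α * σmin / 2) ^ t * ‖F (θ 0)‖) ∧
        (∀ t : ℕ, (1 / 2 : ℝ) * ‖F (θ t)‖ ^ 2 ≤
          (1 - α * σmin / 2) ^ t * ((1 / 2 : ℝ) * ‖F (θ 0)‖ ^ 2)) := by
  obtain ⟨ρ, hρ, hρW⟩ := Metric.isOpen_iff.mp hW_open θstar hθW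
  by_cases hdeg : IsEmpty (Fin r) ∨ L_J < 0
  · have hF0 : ∀ x ∈ ball θstar ρ, F x = 0 := fun x hx => by
      rcases hdeg with hr | hL
      · rw [← hFzero]
        refine apply_eq_of_hasFDerivAt_zero_on_ball (fun z hz => ?_) hx
        simpa [hSVD z (hρW hz), Subsingleton.elim (Usvd z) 0, mulVecCLM] using hJ z
      · rw [eq_of_norm_le_mul_norm_sub hL (hLip x (hρW hx) θstar hθW), hFzero]
    refine ⟨ball θstar ρ, isOpen_ball, hρW, mem_ball_self hρ, fun θ h0 hθ => ?_⟩
    have hconst := spgd_orbit_eq_of_eqOn_zero hF0 h0 hθ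
    simp [hconst, hF0 _ h0, hρW h0]
  rw [not_or, not_isEmpty_iff, not_lt] at hdeg
  obtain ⟨⟨i⟩, hL⟩ := hdeg
  have hσminmax : σmin ≤ σmax := (hσ θstar hθW i).1.trans (hσ θstar hθW i).2
  have hασ : α * σmax ≤ 1 := (le_div_iff₀ (hσmin.trans_le hσminmax)).1 hα_le
  set κ := 1 - α * σmin / 2 with hκ
  have hκ0 : 0 ≤ κ := by nlinarith [mul_le_mul_of_nonneg_left hσminmax hα_pos.le]
  have hκ1 : κ < 1 := by nlinarith [mul_pos hα_pos hσmin]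
  obtain ⟨U, hUo, hUball, hθU, horbit⟩ := exists_isOpen_orbit_mem_ball_le_pow_mul
    (T := fun x => spgdStep F (Usvd x) (Vsvd x) α x) (g := fun x => ‖F x‖)
    (continuous_iff_continuousAt.2 fun x => (hJ x).continuousAt).norm (fun x => norm_nonneg _)
    (by simp [hFzero]) hρ hα_pos.le hκ0 hκ1
    (fun x hx => by
      rw [dist_eq_norm]; exact norm_spgdStep_sub_le (hU x (hρW hx)) (hV x (hρW hx)) hα_pos.le x)
    (fun x hx hTx => norm_apply_spgdStep_le (fun z _ => hJ z) (convex_ball θstar ρ) hx hTx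
      (hSVD x (hρW hx)) (hU x (hρW hx)) (hV x (hρW hx)) (hσ x (hρW hx)) hσmin hσminmax
      hα_pos.le hασ hL (fun z hz => hLip z (hρW hz) x (hρW hx)) (hperp x (hρW hx))
      (hsmall x (hρW hx)))
  refine ⟨U, hUo, hUball.trans hρW, hθU, fun θ h0 hθ => ?_⟩
  have hθt := horbit θ h0 hθ
  refine ⟨fun t => hρW (hθt t).1, fun t => (hθt t).2, fun t => ?_⟩
  have := sq_le_mul_sq_of_le_mul (norm_nonneg _) (pow_nonneg hκ0 t) (pow_le_one₀ hκ0 hκ1.le)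
    (hθt t).2
  linarith

/-- **Local linear convergence of the SPGD method near a regular equilibrium.**
Let `F : ℝ^m → ℝ^n` be `C²` with `F(θ*) = 0`, let `W` be a precompact open neighborhood of
`θ*` on which the Jacobian `J_F` admits a rank-`r` economy SVD `J_F(θ) = U(θ) Σ(θ) V(θ)ᵀ`
with singular values in `[σ_min, σ_max]`, let `J_F` be `L_J`-Lipschitz in spectral norm on
`W`, and assume the orthogonal residual bound with constant `C⊥ > 0` on `W`. If
`0 < α ≤ 1/σ_max` and `(C⊥ + L_J α²/2) ‖F(θ)‖ ≤ α σ_min/2` on `W`, then there is an open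
neighborhood `U_α ⊆ W` of `θ*` such that every SPGD trajectory started in `U_α` stays in
`W` and satisfies `‖F(θ_t)‖ ≤ (1 − α σ_min/2)^t ‖F(θ₀)‖`, hence
`f(θ_t) ≤ (1 − α σ_min/2)^t f(θ₀)` for `f = ½‖F‖²`. -/
theorem spgd_local_linear_convergence
    (n m r : ℕ) (F : EuclideanSpace ℝ (Fin m) → EuclideanSpace ℝ (Fin n))
    (θstar : EuclideanSpace ℝ (Fin m))
    (J : EuclideanSpace ℝ (Fin m) → Matrix (Fin n) (Fin m) ℝ)
    (Usvd : EuclideanSpace ℝ (Fin m) → Matrix (Fin n) (Fin r) ℝ)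
    (Vsvd : EuclideanSpace ℝ (Fin m) → Matrix (Fin m) (Fin r) ℝ)
    (σ : EuclideanSpace ℝ (Fin m) → Fin r → ℝ)
    (W : Set (EuclideanSpace ℝ (Fin m))) (σmin σmax L_J Cperp α : ℝ)
    (hF : ContDiff ℝ 2 F) (hFzero : F θstar = 0)
    (hW_open : IsOpen W) (hθW : θstar ∈ W) (hW_precompact : IsCompact (closure W))
    (hJ : ∀ θ, HasFDerivAt F (mulVecCLM (J θ)) θ)
    (hSVD : ∀ θ ∈ W, J θ = Usvd θ * Matrix.diagonal (σ θ) * (Vsvd θ)ᵀ)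
    (hU : ∀ θ ∈ W, (Usvd θ)ᵀ * Usvd θ = 1) (hV : ∀ θ ∈ W, (Vsvd θ)ᵀ * Vsvd θ = 1)
    (hσmin : 0 < σmin) (hσ : ∀ θ ∈ W, ∀ i, σmin ≤ σ θ i ∧ σ θ i ≤ σmax)
    (hLip : ∀ θ₁ ∈ W, ∀ θ₂ ∈ W, ‖J θ₁ - J θ₂‖ ≤ L_J * ‖θ₁ - θ₂‖)
    (hCperp : 0 < Cperp)
    (hperp : ∀ θ ∈ W,
      ‖(Submodule.orthogonalProjectionOnto (LinearMap.range (Matrix.toEuclideanLin (J θ)))ᗮ (F θ) :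
          EuclideanSpace ℝ (Fin n))‖ ≤ Cperp * ‖F θ‖ ^ 2)
    (hα_pos : 0 < α) (hα_le : α ≤ 1 / σmax)
    (hsmall : ∀ θ ∈ W, (Cperp + L_J * α ^ 2 / 2) * ‖F θ‖ ≤ α * σmin / 2) :
    ∃ Uα : Set (EuclideanSpace ℝ (Fin m)), IsOpen Uα ∧ Uα ⊆ W ∧ θstar ∈ Uα ∧
      ∀ θ : ℕ → EuclideanSpace ℝ (Fin m), θ 0 ∈ Uα →
        (∀ t : ℕ, θ (t + 1) =
          θ t - α • Matrix.toEuclideanLin (Vsvd (θ t) * (Usvd (θ t))ᵀ) (F (θ t))) →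
        (∀ t : ℕ, θ t ∈ W) ∧
        (∀ t : ℕ, ‖F (θ t)‖ ≤ (1 - α * σmin / 2) ^ t * ‖F (θ 0)‖) ∧
        (∀ t : ℕ, (1 / 2 : ℝ) * ‖F (θ t)‖ ^ 2 ≤
          (1 - α * σmin / 2) ^ t * ((1 / 2 : ℝ) * ‖F (θ 0)‖ ^ 2)) :=
  spgd_local_linear_convergence_general n m r F θstar J Usvd Vsvd σ W σmin σmax L_J Cperp α hFzero
    hW_open hθW hJ hSVD hU hV hσmin hσ hLip hperp hα_pos hα_le hsmall
end

section
/- Let F : ℝ^m → ℝ^n be twice continuously differentiable with F(θ*) = 0 at some point θ*, and set f(θ) = (1/2)‖F(θ)‖₂². Suppose the Jacobian J_F has constant rank r on a neighborhood U of θ*. Then there exist an open neighborhood V ⊆ U of θ* and a constant μ > 0 such that the Polyak–Łojasiewicz inequality ‖∇f(θ)‖₂² ≥ 2μ f(θ) holds for all θ ∈ V. -/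
/-!
Let `J₀` be the Jacobian at `θ*`, `Y` its range and `K` its kernel. The map
`Φ θ = (P_K θ, P_Y (F θ))` has invertible derivative at `θ*`, hence a local inverse `Ψ`. Since
`P_Y ∘ F ∘ Ψ` is the second projection, `P_Y ∘ J(Ψ p)` is onto `Y`; as the rank of `J(Ψ p)` is at
most `dim Y`, the two maps have the same kernel, so `F ∘ Ψ` has no derivative in the
`K`-direction and depends only on the `Y`-coordinate. This gives `‖F θ‖ ≤ C ‖P_Y (F θ)‖` near `θ*`.
As `J₀ᵀ` is injective on `Y` and kills `Yᗮ`,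
`‖J₀ᵀ (F θ)‖ = ‖J₀ᵀ (P_Y (F θ))‖ ≥ σ ‖P_Y (F θ)‖ ≥ (σ / C) ‖F θ‖`, and continuity of `J` moves this
to `J(θ)ᵀ` at the cost of a factor `2`. Squaring gives the PL inequality, since `∇(½‖F‖²) = Jᵀ F`.
-/

open Topology Filter Module ContinuousLinearMap
open scoped NNReal InnerProduct

theorem LinearMap.ker_comp_eq_of_finrank_range_le {K V W X : Type*} [DivisionRing K]
    [AddCommGroup V] [Module K V] [AddCommGroup W] [Module K W] [AddCommGroup X] [Module K X]
    [FiniteDimensional K V] {f : V →ₗ[K] W} {g : W →ₗ[K] X}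
    (h : finrank K (LinearMap.range f) ≤ finrank K (LinearMap.range (g ∘ₗ f))) :
    LinearMap.ker (g ∘ₗ f) = LinearMap.ker f := by
  refine (Submodule.eq_of_le_of_finrank_le (LinearMap.ker_le_ker_comp f g) ?_).symm
  have := f.finrank_range_add_finrank_ker
  have := (g ∘ₗ f).finrank_range_add_finrank_ker
  omega

theorem LinearMap.comp_comp_inl_eq_zero_of_comp_comp_eq_snd {K V W X Y : Type*} [Field K]
    [AddCommGroup V] [Module K V] [AddCommGroup W] [Module K W] [AddCommGroup X] [Module K X]
    [AddCommGroup Y] [Module K Y] [FiniteDimensional K V]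
    {J : V →ₗ[K] W} {P : W →ₗ[K] Y} {D : X × Y →ₗ[K] V}
    (hrank : finrank K (LinearMap.range J) ≤ finrank K Y) (hD : P ∘ₗ J ∘ₗ D = snd K X Y) :
    J ∘ₗ D ∘ₗ inl K X Y = 0 := by
  have hsurj : LinearMap.range (P ∘ₗ J) = ⊤ :=
    eq_top_iff.2 fun y _ ↦ ⟨D (0, y), congr($hD (0, y))⟩
  have hker := LinearMap.ker_comp_eq_of_finrank_range_le (g := P) (f := J)
    (by rwa [hsurj, finrank_top])
  ext x
  have hx : D (x, 0) ∈ LinearMap.ker (P ∘ₗ J) := congr($hD (x, 0))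
  rwa [hker] at hx

section Normed

variable {X Y E G : Type*} [NormedAddCommGroup X] [NormedSpace ℝ X] [NormedAddCommGroup Y]
  [NormedSpace ℝ Y] [NormedAddCommGroup E] [NormedSpace ℝ E] [NormedAddCommGroup G]
  [NormedSpace ℝ G]

theorem fderiv_comp_comp_inl_eq_zero [FiniteDimensional ℝ E] {F : E → G} {Ψ : X × Y → E}
    {P : G →L[ℝ] Y} {p : X × Y} (hΨ : DifferentiableAt ℝ Ψ p) (hF : DifferentiableAt ℝ F (Ψ p))
    (hrank : finrank ℝ (fderiv ℝ F (Ψ p)).range ≤ finrank ℝ Y)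
    (hsnd : ∀ᶠ q in 𝓝 p, P (F (Ψ q)) = q.2) :
    fderiv ℝ (F ∘ Ψ) p ∘L inl ℝ X Y = 0 := by
  have hD : P ∘L fderiv ℝ F (Ψ p) ∘L fderiv ℝ Ψ p = snd ℝ X Y :=
    (P.hasFDerivAt.comp p (hF.hasFDerivAt.comp p hΨ.hasFDerivAt)).unique
      ((hasFDerivAt_snd).congr_of_eventuallyEq hsnd)
  rw [fderiv_comp p hF hΨ]
  ext1 x
  exact congr($(LinearMap.comp_comp_inl_eq_zero_of_comp_comp_eq_snd hrank
    (LinearMap.ext fun q ↦ congr($hD q))) x)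

open Metric in
theorem eventually_apply_fst_snd_eq_of_fderiv_comp_inl_eq_zero {H : X × Y → G} {c : X × Y}
    (hH : ∀ᶠ p in 𝓝 c, DifferentiableAt ℝ H p ∧ fderiv ℝ H p ∘L inl ℝ X Y = 0) :
    ∀ᶠ p in 𝓝 c, H (c.1, p.2) = H p := by
  obtain ⟨ρ, hρ, hball⟩ := Metric.eventually_nhds_iff_ball.1 hH
  filter_upwards [ball_mem_nhds c hρ] with p hp
  rw [← ball_prod_same] at hp
  have hslice : ∀ x ∈ ball c.1 ρ,
      HasFDerivWithinAt (fun x ↦ H (x, p.2)) (0 : X →L[ℝ] G) (ball c.1 ρ) x := by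
    intro x hx
    obtain ⟨hdiff, hzero⟩ := hball (x, p.2) (by rw [← ball_prod_same]; exact ⟨hx, hp.2⟩)
    have := hdiff.hasFDerivAt.comp x (hasFDerivAt_prodMk_left (𝕜 := ℝ) x p.2)
    rw [hzero] at this
    exact this.hasFDerivWithinAt
  have := (convex_ball c.1 ρ).norm_image_sub_le_of_norm_hasFDerivWithin_le (C := 0)
    hslice (fun _ _ ↦ by simp) (mem_ball_self hρ) hp.1
  rw [zero_mul, norm_le_zero_iff, sub_eq_zero] at this
  exact this.symm

theorem ContDiffAt.exists_eventually_norm_sub_le_of_fderiv_comp_inl_eq_zero {H : X × Y → G}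
    {c : X × Y} (hH : ContDiffAt ℝ 1 H c) (h : ∀ᶠ p in 𝓝 c, fderiv ℝ H p ∘L inl ℝ X Y = 0) :
    ∃ L : ℝ≥0, ∀ᶠ p in 𝓝 c, ‖H p - H c‖ ≤ L * ‖p.2 - c.2‖ := by
  obtain ⟨L, t, ht, hLip⟩ := hH.exists_lipschitzOnWith
  have hdiff : ∀ᶠ p in 𝓝 c, DifferentiableAt ℝ H p :=
    (hH.eventually (by simp)).mono fun p hp ↦ hp.differentiableAt one_ne_zero
  have hslice : Tendsto (fun p : X × Y ↦ (c.1, p.2)) (𝓝 c) (𝓝 c) :=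
    (continuous_const.prodMk continuous_snd).tendsto' c c rfl
  refine ⟨L, ?_⟩
  filter_upwards [eventually_apply_fst_snd_eq_of_fderiv_comp_inl_eq_zero (hdiff.and h),
    hslice.eventually ht] with p hp hpt
  calc ‖H p - H c‖ = ‖H (c.1, p.2) - H c‖ := by rw [hp]
    _ ≤ L * ‖(c.1, p.2) - c‖ := hLip.norm_sub_le hpt (mem_of_mem_nhds ht)
    _ = L * ‖p.2 - c.2‖ := by simp [Prod.norm_def]

end Normed

section InnerProduct

variable {E G : Type*} [NormedAddCommGroup E] [InnerProductSpace ℝ E] [FiniteDimensional ℝ E]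
  [NormedAddCommGroup G] [InnerProductSpace ℝ G]

theorem ContinuousLinearMap.bijective_orthogonalProjectionOnto_ker_prod (T : E →L[ℝ] G) :
    Function.Bijective
      (T.ker.orthogonalProjectionOnto.prod (T.range.orthogonalProjectionOnto ∘L T)) := by
  have hinj : Function.Injective
      (T.ker.orthogonalProjectionOnto.prod (T.range.orthogonalProjectionOnto ∘L T)) := by
    rw [injective_iff_map_eq_zero]
    intro v hv
    simp only [prod_apply, comp_apply, Prod.mk_eq_zero] at hv
    obtain ⟨hvK, hTv⟩ := hv
    rw [T.range.orthogonalProjectionOnto_mem_subspace_eq_self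
      ⟨T v, LinearMap.mem_range_self (T : E →ₗ[ℝ] G) v⟩, Submodule.mk_eq_zero] at hTv
    rwa [T.ker.orthogonalProjectionOnto_mem_subspace_eq_self ⟨v, LinearMap.mem_ker.2 hTv⟩,
      Submodule.mk_eq_zero] at hvK
  refine ⟨hinj, (LinearMap.injective_iff_surjective_of_finrank_eq_finrank ?_).1 hinj⟩
  rw [finrank_prod, add_comm]
  exact (LinearMap.finrank_range_add_finrank_ker (T : E →ₗ[ℝ] G)).symm

theorem ContDiffAt.exists_eventually_norm_sub_le_mul_norm_starProjection {F : E → G} {θ₀ : E}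
    (hF : ContDiffAt ℝ 1 F θ₀)
    (hrank : ∀ᶠ θ in 𝓝 θ₀, finrank ℝ (fderiv ℝ F θ).range ≤ finrank ℝ (fderiv ℝ F θ₀).range) :
    ∃ C > 0, ∀ᶠ θ in 𝓝 θ₀,
      ‖F θ - F θ₀‖ ≤ C * ‖(fderiv ℝ F θ₀).range.starProjection (F θ - F θ₀)‖ := by
  set J₀ := fderiv ℝ F θ₀
  set P := J₀.range.orthogonalProjectionOnto
  let Φ : E → J₀.ker × J₀.range := fun θ ↦ (J₀.ker.orthogonalProjectionOnto θ, P (F θ))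
  let e := LinearEquiv.ofBijective _ J₀.bijective_orthogonalProjectionOnto_ker_prod
    |>.toContinuousLinearEquiv
  have hΦ : ContDiffAt ℝ 1 Φ θ₀ :=
    J₀.ker.orthogonalProjectionOnto.contDiff.contDiffAt.prodMk (P.contDiff.contDiffAt.comp θ₀ hF)
  have hΦ' : HasFDerivAt Φ (e : E →L[ℝ] J₀.ker × J₀.range) θ₀ :=
    J₀.ker.orthogonalProjectionOnto.hasFDerivAt.prodMk
      (P.hasFDerivAt.comp θ₀ (hF.differentiableAt one_ne_zero).hasFDerivAt)
  have hΦs := hΦ.hasStrictFDerivAt' hΦ' one_ne_zero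
  set Ψ := hΦs.localInverse Φ e θ₀
  have hΨ : ContDiffAt ℝ 1 Ψ (Φ θ₀) := hΦ.to_localInverse hΦ' one_ne_zero
  have hΨθ₀ : Ψ (Φ θ₀) = θ₀ := hΦs.localInverse_apply_image
  have hleft : ∀ᶠ θ in 𝓝 θ₀, Ψ (Φ θ) = θ := hΦs.eventually_left_inverse
  have hright : ∀ᶠ p in 𝓝 (Φ θ₀), Φ (Ψ p) = p := hΦs.eventually_right_inverse
  have hΨt : Tendsto Ψ (𝓝 (Φ θ₀)) (𝓝 θ₀) := by simpa only [hΨθ₀] using hΨ.continuousAt.tendsto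
  have hH : ContDiffAt ℝ 1 (F ∘ Ψ) (Φ θ₀) := (hΨθ₀ ▸ hF).comp _ hΨ
  have hslice : ∀ᶠ p in 𝓝 (Φ θ₀), fderiv ℝ (F ∘ Ψ) p ∘L inl ℝ _ _ = 0 := by
    filter_upwards [hright.eventually_nhds, hΨ.eventually (by simp),
      hΨt.eventually ((hF.eventually (by simp)).and hrank)] with p hp hΨp ⟨hFp, hrankp⟩
    refine fderiv_comp_comp_inl_eq_zero (P := P) (hΨp.differentiableAt one_ne_zero)
      (hFp.differentiableAt one_ne_zero) hrankp ?_
    filter_upwards [hp] with q hq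
    exact congr(Prod.snd $hq)
  obtain ⟨L, hL⟩ := hH.exists_eventually_norm_sub_le_of_fderiv_comp_inl_eq_zero hslice
  refine ⟨L + 1, by positivity, ?_⟩
  filter_upwards [hleft, hΦ.continuousAt.eventually hL] with θ hθ hθL
  calc ‖F θ - F θ₀‖ = ‖(F ∘ Ψ) (Φ θ) - (F ∘ Ψ) (Φ θ₀)‖ := by
        simp only [Function.comp_apply, hθ, hΨθ₀]
    _ ≤ L * ‖P (F θ) - P (F θ₀)‖ := hθL
    _ ≤ (L + 1) * ‖J₀.range.starProjection (F θ - F θ₀)‖ := by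
      rw [← map_sub, Submodule.starProjection_apply, Submodule.norm_coe]
      gcongr
      linarith

end InnerProduct

section Adjoint

variable {E G : Type*} [NormedAddCommGroup E] [InnerProductSpace ℝ E] [CompleteSpace E]
  [NormedAddCommGroup G] [InnerProductSpace ℝ G] [CompleteSpace G]

theorem ContinuousLinearMap.exists_pos_mul_norm_le_norm_adjoint_apply [FiniteDimensional ℝ E]
    (T : E →L[ℝ] G) : ∃ σ > 0, ∀ y ∈ T.range, σ * ‖y‖ ≤ ‖(T†) y‖ := by
  have hinj : LinearMap.ker (((T† : G →L[ℝ] E) : G →ₗ[ℝ] E) ∘ₗ T.range.subtype) = ⊥ := by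
    rw [LinearMap.ker_eq_bot']
    rintro ⟨y, hy⟩ hT
    have hy' : y ∈ T.range ⊓ T.rangeᗮ := ⟨hy, by rw [T.orthogonal_range]; exact hT⟩
    rw [Submodule.inf_orthogonal_eq_bot, Submodule.mem_bot] at hy'
    exact Subtype.ext hy'
  obtain ⟨K, hK, hanti⟩ := LinearMap.exists_antilipschitzWith _ hinj
  refine ⟨K⁻¹, by positivity, fun y hy ↦ ?_⟩
  rw [inv_mul_le_iff₀ (by positivity)]
  exact ZeroHomClass.bound_of_antilipschitz _ hanti (⟨y, hy⟩ : T.range)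

theorem ContinuousLinearMap.adjoint_starProjection_range_apply (T : E →L[ℝ] G)
    [T.range.HasOrthogonalProjection] (x : G) : (T†) (T.range.starProjection x) = (T†) x := by
  have := T.range.sub_starProjection_mem_orthogonal x
  rw [T.orthogonal_range, LinearMap.mem_ker] at this
  rwa [← sub_eq_zero, ← map_sub, ← neg_sub, map_neg, neg_eq_zero]

theorem ContinuousLinearMap.div_two_mul_norm_le_norm_adjoint_apply {T T₀ : E →L[ℝ] G}
    [T₀.range.HasOrthogonalProjection] {x : G} {σ C : ℝ}
    (hσ : ∀ y ∈ T₀.range, σ * ‖y‖ ≤ ‖(T₀†) y‖) (hC : 0 < C)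
    (hx : ‖x‖ ≤ C * ‖T₀.range.starProjection x‖) (hT : ‖T - T₀‖ ≤ σ / (2 * C)) :
    σ / (2 * C) * ‖x‖ ≤ ‖(T†) x‖ := by
  have hσ₀ : 0 ≤ σ := by
    by_contra! h
    linarith [(norm_nonneg _).trans hT, div_neg_of_neg_of_pos h (by positivity : (0 : ℝ) < 2 * C)]
  have hT₀x : σ / C * ‖x‖ ≤ ‖(T₀†) x‖ := calc
    σ / C * ‖x‖ ≤ σ / C * (C * ‖T₀.range.starProjection x‖) :=
      mul_le_mul_of_nonneg_left hx (div_nonneg hσ₀ hC.le)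
    _ = σ * ‖T₀.range.starProjection x‖ := by field_simp
    _ ≤ ‖(T₀†) x‖ := by
      rw [← T₀.adjoint_starProjection_range_apply]
      exact hσ _ (T₀.range.starProjection_apply_mem x)
  have hTx : ‖(T₀†) x - (T†) x‖ ≤ σ / (2 * C) * ‖x‖ := calc
    ‖(T₀†) x - (T†) x‖ = ‖((T - T₀)†) x‖ := by rw [map_sub, sub_apply, norm_sub_rev]
    _ ≤ ‖(T - T₀)†‖ * ‖x‖ := le_opNorm _ _
    _ ≤ σ / (2 * C) * ‖x‖ := by rw [LinearIsometryEquiv.norm_map]; gcongr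
  have : σ / C * ‖x‖ = 2 * (σ / (2 * C) * ‖x‖) := by field_simp
  linarith [norm_sub_norm_le ((T₀†) x) ((T†) x)]

end Adjoint

section PolyakLojasiewicz

variable {E G : Type*} [NormedAddCommGroup E] [InnerProductSpace ℝ E] [NormedAddCommGroup G]
  [InnerProductSpace ℝ G] [CompleteSpace G]

theorem ContDiffAt.exists_pos_eventually_mul_norm_le_norm_adjoint_fderiv_apply
    [FiniteDimensional ℝ E] {F : E → G} {θ₀ : E} (hF : ContDiffAt ℝ 1 F θ₀) (hF₀ : F θ₀ = 0)
    (hrank : ∀ᶠ θ in 𝓝 θ₀, finrank ℝ (fderiv ℝ F θ).range ≤ finrank ℝ (fderiv ℝ F θ₀).range) :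
    ∃ c > 0, ∀ᶠ θ in 𝓝 θ₀, c * ‖F θ‖ ≤ ‖((fderiv ℝ F θ)†) (F θ)‖ := by
  obtain ⟨σ, hσ, hσrange⟩ := (fderiv ℝ F θ₀).exists_pos_mul_norm_le_norm_adjoint_apply
  obtain ⟨C, hC, hCF⟩ := hF.exists_eventually_norm_sub_le_mul_norm_starProjection hrank
  refine ⟨σ / (2 * C), by positivity, ?_⟩
  filter_upwards [hCF, (hF.continuousAt_fderiv one_ne_zero).eventually
    (Metric.closedBall_mem_nhds _ (by positivity : 0 < σ / (2 * C)))] with θ hθ hJθ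
  rw [hF₀, sub_zero] at hθ
  exact div_two_mul_norm_le_norm_adjoint_apply hσrange hC hθ (mem_closedBall_iff_norm.1 hJθ)

theorem hasGradientAt_half_norm_sq [CompleteSpace E] {F : E → G} {θ : E}
    (hF : DifferentiableAt ℝ F θ) :
    HasGradientAt (fun x ↦ (1 / 2 : ℝ) * ‖F x‖ ^ 2) (((fderiv ℝ F θ)†) (F θ)) θ := by
  rw [hasGradientAt_iff_hasFDerivAt]
  refine (hF.hasFDerivAt.norm_sq.const_mul (1 / 2 : ℝ)).congr_fderiv ?_
  ext v
  simp [adjoint_inner_left]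

end PolyakLojasiewicz

/-- **Local Polyak–Łojasiewicz inequality for nonlinear least squares.**
If `F : ℝ^m → ℝ^n` is `C²` with `F(θ*) = 0` and its Jacobian has constant rank `r`
on a neighborhood `U` of `θ*`, then the objective `f(θ) = ½‖F(θ)‖²` satisfies a
PL inequality `‖∇f(θ)‖² ≥ 2 μ f(θ)` on some open neighborhood `V ⊆ U` of `θ*`. -/
theorem pl_inequality_near_regular_equilibrium
    (m n : ℕ) (F : EuclideanSpace ℝ (Fin m) → EuclideanSpace ℝ (Fin n))
    (θstar : EuclideanSpace ℝ (Fin m)) (r : ℕ) (U : Set (EuclideanSpace ℝ (Fin m)))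
    (hF : ContDiff ℝ 2 F)
    (hFzero : F θstar = 0)
    (hU_open : IsOpen U) (hθU : θstar ∈ U)
    (hrank : ∀ θ ∈ U, Module.finrank ℝ (LinearMap.range ((fderiv ℝ F θ : EuclideanSpace ℝ (Fin m) →L[ℝ] EuclideanSpace ℝ (Fin n)) :
      EuclideanSpace ℝ (Fin m) →ₗ[ℝ] EuclideanSpace ℝ (Fin n))) = r) :
    ∃ (V : Set (EuclideanSpace ℝ (Fin m))) (μ : ℝ), IsOpen V ∧ V ⊆ U ∧ θstar ∈ V ∧ 0 < μ ∧
      ∀ θ ∈ V, ‖gradient (fun x => (1 / 2 : ℝ) * ‖F x‖ ^ 2) θ‖ ^ 2 ≥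
        2 * μ * ((1 / 2 : ℝ) * ‖F θ‖ ^ 2) := by
  have hF₁ : ContDiff ℝ 1 F := hF.of_le (by norm_num)
  have hU : U ∈ 𝓝 θstar := hU_open.mem_nhds hθU
  obtain ⟨c, hc, hPL⟩ := hF₁.contDiffAt.exists_pos_eventually_mul_norm_le_norm_adjoint_fderiv_apply
    hFzero (Filter.mem_of_superset hU fun θ hθ ↦ (hrank θ hθ).trans (hrank θstar hθU).symm |>.le)
  obtain ⟨V, hVPL, hV, hθV⟩ := eventually_nhds_iff.1 (hPL.and hU)
  refine ⟨V, c ^ 2, hV, fun θ hθ ↦ (hVPL θ hθ).2, hθV, by positivity, fun θ hθ ↦ ?_⟩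
  rw [(hasGradientAt_half_norm_sq (hF₁.differentiable one_ne_zero θ)).gradient]
  calc 2 * c ^ 2 * ((1 / 2 : ℝ) * ‖F θ‖ ^ 2) = (c * ‖F θ‖) ^ 2 := by ring
    _ ≤ _ := pow_le_pow_left₀ (by positivity) (hVPL θ hθ).1 2
end

section
/- Let F : ℝ^m → ℝ^n be twice continuously differentiable with F(θ*) = 0 at some point θ*, and suppose the Jacobian J_F has constant rank r on a neighborhood U of θ*. Then there exist an open neighborhood W ⊆ U of θ* and a constant C_⊥ > 0 such that for every θ ∈ W, ‖P_{range(J_F(θ))^⊥} F(θ)‖₂ ≤ C_⊥ ‖F(θ)‖₂², where P_{range(J_F(θ))^⊥} denotes the orthogonal projection of ℝ^n onto the orthogonal complement of the column space of J_F(θ). In other words, the component of the residual F(θ) orthogonal to the range of the Jacobian is of second order in ‖F(θ)‖₂. -/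
/-!
Let `S` and `K` be the range and the kernel of `F'(θ*)`. The map `Ψ x = (P_S F(x), P_K x)` has
invertible derivative at `θ*`, so it has a `C¹` local inverse `Φ`. Since the rank of
`P_S ∘ F'(x)` cannot drop near `θ*` while that of `F'(x)` cannot rise, the two maps have the same
kernel there; hence `F ∘ Φ(0, ·)` has zero derivative and vanishes identically. The point
`p(x) = Φ(0, P_K x)` is then a zero of `F` with `‖x - p(x)‖ ≤ C ‖P_S F(x)‖ ≤ C ‖F(x)‖`, and
Taylor's formula at `x` gives `F(x) = F'(x)(x - p(x)) + O(‖x - p(x)‖²)`, whose component orthogonal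
to the range of `F'(x)` is therefore `O(‖F(x)‖²)`.
-/

open Filter Topology Metric Module

section LinearAlgebra

variable {K V W U : Type*} [Field K] [AddCommGroup V] [Module K V] [FiniteDimensional K V]
  [AddCommGroup W] [Module K W] [AddCommGroup U] [Module K U]

theorem LinearMap.ker_comp_eq_iff_finrank_range_le (f : V →ₗ[K] W) (g : W →ₗ[K] U) :
    ker (g ∘ₗ f) = ker f ↔ finrank K (range f) ≤ finrank K (range (g ∘ₗ f)) := by
  have hf := finrank_range_add_finrank_ker f
  have hgf := finrank_range_add_finrank_ker (g ∘ₗ f)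
  refine ⟨fun h => by rw [h] at hgf; omega, fun h => ?_⟩
  exact (Submodule.eq_of_le_of_finrank_le (ker_le_ker_comp f g) (by omega)).symm

end LinearAlgebra

section RankSemicontinuity

variable {𝕜 X E G H : Type*} [NontriviallyNormedField 𝕜] [CompleteSpace 𝕜] [TopologicalSpace X]
  [NormedAddCommGroup E] [NormedSpace 𝕜 E] [FiniteDimensional 𝕜 E]
  [NormedAddCommGroup G] [NormedSpace 𝕜 G] [NormedAddCommGroup H] [NormedSpace 𝕜 H]
  {T : X → E →L[𝕜] G} {x₀ : X}

theorem ContinuousAt.eventually_finrank_range_le (hT : ContinuousAt T x₀) :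
    ∀ᶠ x in 𝓝 x₀, finrank 𝕜 (LinearMap.range (T x₀ : E →ₗ[𝕜] G)) ≤
      finrank 𝕜 (LinearMap.range (T x : E →ₗ[𝕜] G)) := by
  let b := finBasis 𝕜 (LinearMap.range (T x₀ : E →ₗ[𝕜] G))
  choose u hu using fun i => (b i).2
  have hli : LinearIndependent 𝕜 fun i => T x₀ (u i) := by
    rw [show (fun i => T x₀ (u i)) = _ ∘ b from funext hu]
    exact b.linearIndependent.map' _ (LinearMap.range (T x₀ : E →ₗ[𝕜] G)).ker_subtype
  have hcont : ContinuousAt (fun x i => T x (u i)) x₀ :=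
    continuousAt_pi.2 fun i => hT.clm_apply continuousAt_const
  filter_upwards [hcont.eventually hli.eventually] with x hx
  calc finrank 𝕜 (LinearMap.range (T x₀ : E →ₗ[𝕜] G))
      = finrank 𝕜 (Submodule.span 𝕜 (Set.range fun i => T x (u i))) := by
        rw [finrank_span_eq_card hx, Fintype.card_fin]
    _ ≤ finrank 𝕜 (LinearMap.range (T x : E →ₗ[𝕜] G)) :=
        Submodule.finrank_mono (Submodule.span_le.2 (Set.range_subset_iff.2 fun i => ⟨u i, rfl⟩))

theorem ContinuousAt.eventually_ker_comp_eq (hT : ContinuousAt T x₀) (Q : G →L[𝕜] H)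
    (hQ : LinearMap.ker (Q ∘L T x₀ : E →ₗ[𝕜] H) = LinearMap.ker (T x₀ : E →ₗ[𝕜] G))
    (hrank : ∀ᶠ x in 𝓝 x₀, finrank 𝕜 (LinearMap.range (T x : E →ₗ[𝕜] G)) ≤
      finrank 𝕜 (LinearMap.range (T x₀ : E →ₗ[𝕜] G))) :
    ∀ᶠ x in 𝓝 x₀, LinearMap.ker (Q ∘L T x : E →ₗ[𝕜] H) = LinearMap.ker (T x : E →ₗ[𝕜] G) := by
  have hQT : ContinuousAt (fun x => Q ∘L T x) x₀ := continuousAt_const.clm_comp hT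
  filter_upwards [hrank, hQT.eventually_finrank_range_le] with x hx hQx
  have h₀ := ((T x₀ : E →ₗ[𝕜] G).ker_comp_eq_iff_finrank_range_le (Q : G →ₗ[𝕜] H)).1 hQ
  exact ((T x : E →ₗ[𝕜] G).ker_comp_eq_iff_finrank_range_le (Q : G →ₗ[𝕜] H)).2
    (hx.trans (h₀.trans hQx))

end RankSemicontinuity

section Projection

variable {𝕜 E G : Type*} [RCLike 𝕜] [NormedAddCommGroup E] [InnerProductSpace 𝕜 E]
  [NormedAddCommGroup G] [InnerProductSpace 𝕜 G]

theorem Submodule.norm_orthogonalProjectionOnto_orthogonal_le (K : Submodule 𝕜 E)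
    [K.HasOrthogonalProjection] (v : E) {w : E} (hw : w ∈ K) :
    ‖(Kᗮ.orthogonalProjectionOnto v : E)‖ ≤ ‖v - w‖ := by
  rw [coe_orthogonalProjectionOnto_apply, starProjection_orthogonal_val, starProjection_minimal]
  exact ciInf_le ⟨0, Set.forall_mem_range.2 fun _ => norm_nonneg _⟩ (⟨w, hw⟩ : K)

theorem ker_orthogonalProjectionOnto_range_comp (f : E →L[𝕜] G)
    [(LinearMap.range (f : E →ₗ[𝕜] G)).HasOrthogonalProjection] :
    LinearMap.ker ((LinearMap.range (f : E →ₗ[𝕜] G)).orthogonalProjectionOnto ∘L f :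
        E →ₗ[𝕜] LinearMap.range (f : E →ₗ[𝕜] G)) =
      LinearMap.ker (f : E →ₗ[𝕜] G) := by
  ext x
  have hx := (LinearMap.range (f : E →ₗ[𝕜] G)).orthogonalProjectionOnto_mem_subspace_eq_self
    ⟨f x, x, rfl⟩
  simp only [LinearMap.mem_ker, ContinuousLinearMap.coe_coe, ContinuousLinearMap.comp_apply, hx]
  exact Submodule.mk_eq_zero (LinearMap.range (f : E →ₗ[𝕜] G)) _

end Projection

section Calculus

variable {Z G H : Type*} [NormedAddCommGroup Z] [NormedSpace ℝ Z]
  [NormedAddCommGroup G] [NormedSpace ℝ G] [NormedAddCommGroup H] [NormedSpace ℝ H]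

theorem Convex.norm_image_sub_sub_fderiv_le_of_lipschitzOnWith {f : Z → G} {s : Set Z}
    {L : NNReal} {x y : Z} (hs : Convex ℝ s) (hf : ∀ z ∈ s, DifferentiableAt ℝ f z)
    (hL : LipschitzOnWith L (fderiv ℝ f) s) (hx : x ∈ s) (hy : y ∈ s) :
    ‖f y - f x - fderiv ℝ f x (y - x)‖ ≤ L * ‖y - x‖ ^ 2 := by
  have hseg : segment ℝ x y ⊆ s := hs.segment_subset hx hy
  have bound : ∀ z ∈ segment ℝ x y, ‖fderiv ℝ f z - fderiv ℝ f x‖ ≤ L * ‖y - x‖ := fun z hz =>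
    calc ‖fderiv ℝ f z - fderiv ℝ f x‖ ≤ L * ‖z - x‖ := hL.norm_sub_le (hseg hz) hx
      _ ≤ L * ‖y - x‖ := by gcongr; exact norm_sub_le_of_mem_segment hz
  calc ‖f y - f x - fderiv ℝ f x (y - x)‖ ≤ L * ‖y - x‖ * ‖y - x‖ :=
        (convex_segment x y).norm_image_sub_le_of_norm_fderiv_le' (fun z hz => hf z (hseg hz))
          bound (left_mem_segment ℝ x y) (right_mem_segment ℝ x y)
    _ = L * ‖y - x‖ ^ 2 := by ring

theorem IsOpen.exists_is_const_of_comp_is_const {g : Z → G} {s : Set Z} {c : H}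
    (hs : IsOpen s) (hs' : IsPreconnected s) (hg : DifferentiableOn ℝ g s) (Q : G →L[ℝ] H)
    (hQg : ∀ z ∈ s, Q (g z) = c)
    (hker : ∀ z ∈ s, ∀ v, Q (fderiv ℝ g z v) = 0 → fderiv ℝ g z v = 0) :
    ∃ a, ∀ z ∈ s, g z = a := by
  refine hs.exists_is_const_of_fderiv_eq_zero hs' hg fun z hz => ?_
  have hQg' : ⇑Q ∘ g =ᶠ[𝓝 z] fun _ => c := eventually_of_mem (hs.mem_nhds hz) hQg
  have hd : Q ∘L fderiv ℝ g z = 0 := by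
    rw [← (Q.hasFDerivAt.comp z (hg.differentiableAt (hs.mem_nhds hz)).hasFDerivAt).fderiv,
      hQg'.fderiv_eq, fderiv_const_apply]
  ext v
  exact hker z hz v (by simpa using DFunLike.congr_fun hd v)

end Calculus

section ConstantRank

variable {E G : Type*} [NormedAddCommGroup E] [InnerProductSpace ℝ E] [FiniteDimensional ℝ E]
  [NormedAddCommGroup G] [InnerProductSpace ℝ G] {F : E → G} {x₀ : E}

noncomputable def rankChart (F : E → G) (x₀ : E) (x : E) :
    LinearMap.range (fderiv ℝ F x₀ : E →ₗ[ℝ] G) × LinearMap.ker (fderiv ℝ F x₀ : E →ₗ[ℝ] G) :=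
  ((LinearMap.range (fderiv ℝ F x₀ : E →ₗ[ℝ] G)).orthogonalProjectionOnto (F x),
    (LinearMap.ker (fderiv ℝ F x₀ : E →ₗ[ℝ] G)).orthogonalProjectionOnto x)

theorem contDiffAt_rankChart (hF : ContDiffAt ℝ 1 F x₀) : ContDiffAt ℝ 1 (rankChart F x₀) x₀ :=
  ((ContinuousLinearMap.contDiff _).contDiffAt.comp x₀ hF).prodMk
    (ContinuousLinearMap.contDiff _).contDiffAt

theorem exists_hasFDerivAt_rankChart (hF : DifferentiableAt ℝ F x₀) :
    ∃ e : E ≃L[ℝ] LinearMap.range (fderiv ℝ F x₀ : E →ₗ[ℝ] G) ×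
        LinearMap.ker (fderiv ℝ F x₀ : E →ₗ[ℝ] G),
      HasFDerivAt (rankChart F x₀) (e : E →L[ℝ] _) x₀ := by
  set S := LinearMap.range (fderiv ℝ F x₀ : E →ₗ[ℝ] G)
  set K := LinearMap.ker (fderiv ℝ F x₀ : E →ₗ[ℝ] G)
  set D : E →L[ℝ] S × K :=
    (S.orthogonalProjectionOnto ∘L fderiv ℝ F x₀).prod K.orthogonalProjectionOnto
  have hD : HasFDerivAt (rankChart F x₀) D x₀ :=
    (S.orthogonalProjectionOnto.hasFDerivAt.comp x₀ hF.hasFDerivAt).prodMk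
      K.orthogonalProjectionOnto.hasFDerivAt
  have hinj : Function.Injective D := by
    refine (injective_iff_map_eq_zero D).2 fun x hx => ?_
    have hxK : x ∈ LinearMap.ker (S.orthogonalProjectionOnto ∘L fderiv ℝ F x₀ : E →ₗ[ℝ] S) :=
      congrArg Prod.fst hx
    rw [ker_orthogonalProjectionOnto_range_comp] at hxK
    have hx₂ : K.orthogonalProjectionOnto (⟨x, hxK⟩ : K) = 0 := congrArg Prod.snd hx
    rw [K.orthogonalProjectionOnto_mem_subspace_eq_self] at hx₂
    exact (Submodule.mk_eq_zero K hxK).1 hx₂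
  have hdim : finrank ℝ E = finrank ℝ (S × K) := by
    rw [finrank_prod]
    exact (LinearMap.finrank_range_add_finrank_ker _).symm
  exact ⟨(LinearMap.linearEquivOfInjective (D : E →ₗ[ℝ] S × K) hinj hdim).toContinuousLinearEquiv,
    hD⟩

theorem eventually_apply_rankChart_inverse_zero_eq_zero
    {Φ : LinearMap.range (fderiv ℝ F x₀ : E →ₗ[ℝ] G) ×
      LinearMap.ker (fderiv ℝ F x₀ : E →ₗ[ℝ] G) → E}
    (hF : ContDiffAt ℝ 1 F x₀) (hF₀ : F x₀ = 0)
    (hrank : ∀ᶠ x in 𝓝 x₀, finrank ℝ (LinearMap.range (fderiv ℝ F x : E →ₗ[ℝ] G)) ≤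
      finrank ℝ (LinearMap.range (fderiv ℝ F x₀ : E →ₗ[ℝ] G)))
    (hΦ : ContDiffAt ℝ 1 Φ (rankChart F x₀ x₀)) (hΦ₀ : Φ (rankChart F x₀ x₀) = x₀)
    (hright : ∀ᶠ p in 𝓝 (rankChart F x₀ x₀), rankChart F x₀ (Φ p) = p) :
    ∀ᶠ z in 𝓝 (rankChart F x₀ x₀).2, F (Φ (0, z)) = 0 := by
  set Q := (LinearMap.range (fderiv ℝ F x₀ : E →ₗ[ℝ] G)).orthogonalProjectionOnto
  set z₀ := (rankChart F x₀ x₀).2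
  have hΨ₀ : rankChart F x₀ x₀ = (0, z₀) := by simp [rankChart, hF₀, z₀]
  rw [hΨ₀] at hΦ hΦ₀ hright
  set φ := fun z => Φ (0, z)
  have hφ : ContDiffAt ℝ 1 φ z₀ := hΦ.comp z₀ (contDiffAt_const.prodMk contDiffAt_id)
  have hφ₀ : φ z₀ = x₀ := hΦ₀
  have hφt : Tendsto φ (𝓝 z₀) (𝓝 x₀) := by simpa only [hφ₀] using hφ.continuousAt.tendsto
  have hslice : Tendsto (fun z => ((0 : LinearMap.range (fderiv ℝ F x₀ : E →ₗ[ℝ] G)), z))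
      (𝓝 z₀) (𝓝 (0, z₀)) :=
    (continuous_const.prodMk continuous_id).tendsto z₀
  have hker := (hF.fderiv_right (m := 0) le_rfl).continuousAt.eventually_ker_comp_eq
    Q (ker_orthogonalProjectionOnto_range_comp _) hrank
  obtain ⟨ε, hε, hball⟩ := Metric.eventually_nhds_iff_ball.1
    ((hslice.eventually hright).and ((hφ.eventually (by simp)).and
      (hφt.eventually ((hF.eventually (by simp)).and hker))))
  have hdiff : ∀ z ∈ ball z₀ ε, DifferentiableAt ℝ (F ∘ φ) z := fun z hz =>
    ((hball z hz).2.2.1.differentiableAt one_ne_zero).comp z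
      ((hball z hz).2.1.differentiableAt one_ne_zero)
  obtain ⟨a, ha⟩ := isOpen_ball.exists_is_const_of_comp_is_const (convex_ball z₀ ε).isPreconnected
    (fun z hz => (hdiff z hz).differentiableWithinAt) Q
    (c := 0) (fun z hz => congrArg Prod.fst (hball z hz).1) fun z hz v hv => by
      obtain ⟨-, hφz, hFz, hkerz⟩ := hball z hz
      rw [fderiv_comp z (hFz.differentiableAt one_ne_zero) (hφz.differentiableAt one_ne_zero)]
        at hv ⊢
      have : fderiv ℝ φ z v ∈ LinearMap.ker
          (Q ∘L fderiv ℝ F (φ z) : E →ₗ[ℝ] LinearMap.range (fderiv ℝ F x₀ : E →ₗ[ℝ] G)) := hv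
      rw [hkerz] at this
      exact this
  filter_upwards [ball_mem_nhds z₀ hε] with z hz
  have := ha z hz
  rw [← ha z₀ (mem_ball_self hε)] at this
  simpa [hφ₀, hF₀] using this

theorem exists_nearby_zero_of_finrank_range_fderiv_le (hF : ContDiffAt ℝ 1 F x₀) (hF₀ : F x₀ = 0)
    (hrank : ∀ᶠ x in 𝓝 x₀, finrank ℝ (LinearMap.range (fderiv ℝ F x : E →ₗ[ℝ] G)) ≤
      finrank ℝ (LinearMap.range (fderiv ℝ F x₀ : E →ₗ[ℝ] G))) :
    ∃ (C : ℝ) (p : E → E), Tendsto p (𝓝 x₀) (𝓝 x₀) ∧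
      ∀ᶠ x in 𝓝 x₀, F (p x) = 0 ∧ ‖x - p x‖ ≤ C * ‖F x‖ := by
  obtain ⟨e, he⟩ := exists_hasFDerivAt_rankChart (hF.differentiableAt one_ne_zero)
  have hΨ := contDiffAt_rankChart hF
  have hstrict := hΨ.hasStrictFDerivAt' he one_ne_zero
  set Φ := hΨ.localInverse he one_ne_zero
  have hΦ : ContDiffAt ℝ 1 Φ (rankChart F x₀ x₀) := hΨ.to_localInverse he one_ne_zero
  have hΦ₀ : Φ (rankChart F x₀ x₀) = x₀ := hΨ.localInverse_apply_image he one_ne_zero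
  have hzero := eventually_apply_rankChart_inverse_zero_eq_zero hF hF₀ hrank hΦ hΦ₀
    hstrict.eventually_right_inverse
  obtain ⟨C, t, ht, hlip⟩ := hΦ.exists_lipschitzOnWith
  set pK := (LinearMap.ker (fderiv ℝ F x₀ : E →ₗ[ℝ] G)).orthogonalProjectionOnto
  have hΨ₀ : rankChart F x₀ x₀ = (0, pK x₀) := by simp [rankChart, hF₀, pK]
  have hslice : Tendsto (fun x => (0, pK x)) (𝓝 x₀) (𝓝 (rankChart F x₀ x₀)) := by
    rw [hΨ₀]
    exact (continuous_const.prodMk pK.continuous).tendsto x₀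
  refine ⟨C, fun x => Φ (0, pK x), ?_, ?_⟩
  · have := hΦ.continuousAt.tendsto.comp hslice
    rwa [hΦ₀] at this
  filter_upwards [hstrict.eventually_left_inverse, (pK.continuous.tendsto x₀).eventually hzero,
    hslice.eventually (eventually_of_mem ht fun p hp => hp),
    hΨ.continuousAt.eventually (eventually_of_mem ht fun p hp => hp)] with x hleft hx hxt hΨt
  refine ⟨hx, ?_⟩
  calc ‖x - Φ (0, pK x)‖ = dist (Φ (rankChart F x₀ x)) (Φ (0, pK x)) := by
        rw [show Φ (rankChart F x₀ x) = x from hleft, dist_eq_norm]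
    _ ≤ C * dist (rankChart F x₀ x) (0, pK x) := hlip.dist_le_mul _ hΨt _ hxt
    _ = C * ‖(LinearMap.range (fderiv ℝ F x₀ : E →ₗ[ℝ] G)).orthogonalProjectionOnto (F x)‖ := by
        simp [Prod.dist_eq, rankChart, pK]
    _ ≤ C * ‖F x‖ := by
        gcongr
        exact Submodule.norm_orthogonalProjectionOnto_apply_le _ _

end ConstantRank

/-- **The residual component orthogonal to the Jacobian range is second order.**
If `F : ℝ^m → ℝ^n` is `C²` with `F(θ*) = 0` and its Jacobian has constant rank `r` on a
neighborhood `U` of `θ*`, then there are an open neighborhood `W ⊆ U` of `θ*` and a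
constant `C⊥ > 0` such that for all `θ ∈ W`,
`‖P_{range(J_F(θ))ᗮ} F(θ)‖ ≤ C⊥ ‖F(θ)‖²`. -/
theorem orthogonal_residual_second_order
    (m n : ℕ) (F : EuclideanSpace ℝ (Fin m) → EuclideanSpace ℝ (Fin n))
    (θstar : EuclideanSpace ℝ (Fin m)) (r : ℕ) (U : Set (EuclideanSpace ℝ (Fin m)))
    (hF : ContDiff ℝ 2 F)
    (hFzero : F θstar = 0)
    (hU_open : IsOpen U) (hθU : θstar ∈ U)
    (hrank : ∀ θ ∈ U, Module.finrank ℝ (LinearMap.range ((fderiv ℝ F θ : EuclideanSpace ℝ (Fin m) →ₗ[ℝ] EuclideanSpace ℝ (Fin n)))) = r) :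
    ∃ (W : Set (EuclideanSpace ℝ (Fin m))) (Cperp : ℝ),
      IsOpen W ∧ W ⊆ U ∧ θstar ∈ W ∧ 0 < Cperp ∧
      ∀ θ ∈ W,
        ‖(Submodule.orthogonalProjectionOnto (LinearMap.range ((fderiv ℝ F θ : EuclideanSpace ℝ (Fin m) →ₗ[ℝ] EuclideanSpace ℝ (Fin n))))ᗮ (F θ) :
            EuclideanSpace ℝ (Fin n))‖ ≤ Cperp * ‖F θ‖ ^ 2 := by
  have hU : ∀ᶠ θ in 𝓝 θstar, θ ∈ U := hU_open.mem_nhds hθU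
  obtain ⟨C, p, hp, hpF⟩ := exists_nearby_zero_of_finrank_range_fderiv_le
    (hF.contDiffAt.of_le one_le_two) hFzero
    (hU.mono fun θ hθ => ((hrank θ hθ).trans (hrank θstar hθU).symm).le)
  obtain ⟨L, s, hs, hlip⟩ := (hF.fderiv_right (m := 1) le_rfl).contDiffAt.exists_lipschitzOnWith
  obtain ⟨ε, hε, hεs⟩ := Metric.mem_nhds_iff.1 hs
  obtain ⟨δ, hδ, hδW⟩ := Metric.eventually_nhds_iff_ball.1 (hU.and (hpF.and
    ((isOpen_ball.eventually_mem (mem_ball_self hε)).and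
      (hp.eventually_mem (ball_mem_nhds θstar hε)))))
  refine ⟨ball θstar δ, L * C ^ 2 + 1, isOpen_ball, fun θ hθ => (hδW θ hθ).1,
    mem_ball_self hδ, by positivity, fun θ hθ => ?_⟩
  obtain ⟨-, ⟨hpθ, hdist⟩, hθε, hpθε⟩ := hδW θ hθ
  calc _ ≤ ‖F θ - fderiv ℝ F θ (θ - p θ)‖ :=
        Submodule.norm_orthogonalProjectionOnto_orthogonal_le _ _ (LinearMap.mem_range_self _ _)
    _ = ‖F (p θ) - F θ - fderiv ℝ F θ (p θ - θ)‖ := by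
        rw [hpθ, ← norm_neg, ← neg_sub θ, map_neg]
        abel_nf
    _ ≤ L * ‖p θ - θ‖ ^ 2 := (convex_ball θstar ε).norm_image_sub_sub_fderiv_le_of_lipschitzOnWith
        (fun z _ => hF.differentiable two_ne_zero z) (hlip.mono hεs) hθε hpθε
    _ ≤ L * (C * ‖F θ‖) ^ 2 := by
        rw [norm_sub_rev]
        gcongr
    _ ≤ (L * C ^ 2 + 1) * ‖F θ‖ ^ 2 := by nlinarith [sq_nonneg ‖F θ‖]
end

section
/- Let 0 < β₁ < 1, and let {λ_t}_{t≥1} ⊂ ℝ^m, {A_t}_{t≥1} ⊂ ℝ^{m×m} be arbitrary sequences. Define m₀ = 0, m_t = β₁ m_{t−1} + (1 − β₁)λ_t, and iterates θ_{t+1} = θ_t − A_t m_t with the convention θ₀ = θ₁. Define the auxiliary sequence z_t = θ_t + (β₁/(1 − β₁))(θ_t − θ_{t−1}). Then for every t ≥ 2, z_{t+1} − z_t = (β₁/(1 − β₁))(A_{t−1} − A_t) m_{t−1} − A_t λ_t; moreover z₂ − z₁ = −A₁ λ₁. -/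
open Matrix

/-- **Increment identity for the auxiliary momentum sequence.**
For the momentum iteration `m_t = β₁ m_{t−1} + (1 − β₁) λ_t`, `θ_{t+1} = θ_t − A_t m_t`
(with `m₀ = 0` and `θ₀ = θ₁`), the auxiliary sequence
`z_t = θ_t + (β₁/(1−β₁))(θ_t − θ_{t−1})` satisfies, for `t ≥ 2`,
`z_{t+1} − z_t = (β₁/(1−β₁)) (A_{t−1} − A_t) m_{t−1} − A_t λ_t`, and `z₂ − z₁ = −A₁ λ₁`. -/
theorem auxiliary_sequence_increment
    (d : ℕ) (β₁ : ℝ) (hβ₁ : 0 < β₁ ∧ β₁ < 1)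
    (lam : ℕ → Fin d → ℝ) (A : ℕ → Matrix (Fin d) (Fin d) ℝ)
    (mo θ z : ℕ → Fin d → ℝ)
    (hm0 : mo 0 = 0)
    (hm : ∀ t : ℕ, 1 ≤ t → mo t = β₁ • mo (t - 1) + (1 - β₁) • lam t)
    (hθ0 : θ 0 = θ 1)
    (hθ : ∀ t : ℕ, 1 ≤ t → θ (t + 1) = θ t - (A t).mulVec (mo t))
    (hz : ∀ t : ℕ, 1 ≤ t → z t = θ t + (β₁ / (1 - β₁)) • (θ t - θ (t - 1))) :
    (∀ t : ℕ, 2 ≤ t →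
      z (t + 1) - z t =
        (β₁ / (1 - β₁)) • (A (t - 1) - A t).mulVec (mo (t - 1)) - (A t).mulVec (lam t)) ∧
    z 2 - z 1 = -(A 1).mulVec (lam 1) := by
  obtain ⟨hb0, hb1⟩ := hβ₁
  have hb : (1 : ℝ) - β₁ ≠ 0 := by linarith
  constructor
  · intro t ht
    have ht1 : 1 ≤ t := by omega
    have ht1' : 1 ≤ t - 1 := by omega
    have he : t - 1 + 1 = t := by omega
    have hθt : θ t = θ (t - 1) - (A (t - 1)).mulVec (mo (t - 1)) := by
      have := hθ (t - 1) ht1'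
      rwa [he] at this
    have hz1 := hz (t + 1) (by omega)
    have hz2 := hz t ht1
    simp only [Nat.add_sub_cancel] at hz1
    rw [hz1, hz2, hθ t ht1, hm t ht1, hθt]
    rw [Matrix.mulVec_add, Matrix.mulVec_smul, Matrix.mulVec_smul, Matrix.sub_mulVec]
    match_scalars <;> field_simp <;> ring
  · have hz2 := hz 2 (by norm_num)
    have hz1 := hz 1 (by norm_num)
    have hθ2 := hθ 1 (by norm_num)
    have hm1 := hm 1 (by norm_num)
    norm_num [hm0] at hz2 hz1 hm1 hθ2
    rw [hz2, hz1, hθ0, hθ2, hm1, Matrix.mulVec_smul]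
    match_scalars <;> field_simp <;> ring
end

section
/- Let 0 < β₁ < 1, let {λ_t}_{t≥1} ⊂ ℝ^m, and let {A_t}_{t≥1} be diagonal matrices with nonnegative entries that are entrywise non-increasing in t (each diagonal entry of A_t is at most the corresponding entry of A_{t−1}). Define m₀ = 0, m_t = β₁ m_{t−1} + (1 − β₁)λ_t, θ_{t+1} = θ_t − A_t m_t with convention θ₀ = θ₁, and z_t = θ_t + (β₁/(1 − β₁))(θ_t − θ_{t−1}). Then for every t ≥ 2, ‖z_{t+1} − z_t‖₂ ≤ (β₁/(1 − β₁))‖θ_t − θ_{t−1}‖₂ + ‖A_t λ_t‖₂. -/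
open Matrix

private lemma euclid_apply {d : ℕ} (a : Fin d → ℝ) (v : EuclideanSpace ℝ (Fin d)) (i : Fin d) :
    Matrix.toEuclideanLin (Matrix.diagonal a) v i = a i * v i := by
  simp [Matrix.toEuclideanLin, Matrix.mulVec_diagonal]

private lemma euclid_norm_le {d : ℕ} (v w : EuclideanSpace ℝ (Fin d))
    (h : ∀ i, ‖w i‖ ≤ ‖v i‖) : ‖w‖ ≤ ‖v‖ := by
  rw [EuclideanSpace.norm_eq, EuclideanSpace.norm_eq]
  apply Real.sqrt_le_sqrt
  exact Finset.sum_le_sum fun i _ => pow_le_pow_left₀ (norm_nonneg _) (h i) 2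

/-- **Norm bound on the increment of the auxiliary momentum sequence.**
For momentum iterates `θ_{t+1} = θ_t − A_t m_t` with diagonal step matrices `A_t` whose
nonnegative diagonal entries are entrywise non-increasing in `t`, the auxiliary sequence
`z_t = θ_t + (β₁/(1−β₁))(θ_t − θ_{t−1})` satisfies, for `t ≥ 2`,
`‖z_{t+1} − z_t‖₂ ≤ (β₁/(1−β₁)) ‖θ_t − θ_{t−1}‖₂ + ‖A_t λ_t‖₂`. -/
theorem auxiliary_sequence_increment_norm_bound
    (d : ℕ) (β₁ : ℝ) (hβ₁ : 0 < β₁ ∧ β₁ < 1)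
    (lam : ℕ → EuclideanSpace ℝ (Fin d)) (a : ℕ → Fin d → ℝ)
    (ha_nonneg : ∀ t i, 0 ≤ a t i)
    (ha_mono : ∀ t : ℕ, 1 ≤ t → ∀ i, a t i ≤ a (t - 1) i)
    (mo θ z : ℕ → EuclideanSpace ℝ (Fin d))
    (hm0 : mo 0 = 0)
    (hm : ∀ t : ℕ, 1 ≤ t → mo t = β₁ • mo (t - 1) + (1 - β₁) • lam t)
    (hθ0 : θ 0 = θ 1)
    (hθ : ∀ t : ℕ, 1 ≤ t →
      θ (t + 1) = θ t - Matrix.toEuclideanLin (Matrix.diagonal (a t)) (mo t))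
    (hz : ∀ t : ℕ, 1 ≤ t → z t = θ t + (β₁ / (1 - β₁)) • (θ t - θ (t - 1))) :
    ∀ t : ℕ, 2 ≤ t →
      ‖z (t + 1) - z t‖ ≤ (β₁ / (1 - β₁)) * ‖θ t - θ (t - 1)‖ +
        ‖Matrix.toEuclideanLin (Matrix.diagonal (a t)) (lam t)‖ := by
  obtain ⟨hb0, hb1⟩ := hβ₁
  have h1 : (0:ℝ) < 1 - β₁ := by linarith
  set c := β₁ / (1 - β₁) with hc_def
  have hc : 0 ≤ c := div_nonneg hb0.le h1.le
  intro t ht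
  set L : ℕ → EuclideanSpace ℝ (Fin d) →ₗ[ℝ] EuclideanSpace ℝ (Fin d) :=
    fun s => Matrix.toEuclideanLin (Matrix.diagonal (a s)) with hL
  have ht1 : 1 ≤ t := by omega
  have hts : t - 1 + 1 = t := by omega
  have hθt : θ (t + 1) = θ t - L t (mo t) := hθ t ht1
  have hθtm : θ t = θ (t - 1) - L (t - 1) (mo (t - 1)) := by
    have := hθ (t - 1) (by omega); rwa [hts] at this
  have hdiff : θ t - θ (t - 1) = -(L (t - 1) (mo (t - 1))) := by
    rw [hθtm]; abel
  have hmt : mo t = β₁ • mo (t - 1) + (1 - β₁) • lam t := hm t ht1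
  have key : z (t + 1) - z t
      = c • (L (t - 1) (mo (t - 1)) - L t (mo (t - 1))) - L t (lam t) := by
    have hz1 : z (t + 1) = θ (t + 1) + c • (θ (t + 1) - θ t) := by
      have := hz (t + 1) (by omega); simpa using this
    have hz2 : z t = θ t + c • (θ t - θ (t - 1)) := hz t ht1
    rw [hz1, hz2, hθt, hmt, map_add, _root_.map_smul, _root_.map_smul, hdiff]
    simp only [hc_def]
    match_scalars <;> field_simp <;> ring
  have hnorm1 : ‖z (t + 1) - z t‖
      ≤ c * ‖L (t - 1) (mo (t - 1)) - L t (mo (t - 1))‖ + ‖L t (lam t)‖ := by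
    rw [key]
    calc ‖c • (L (t - 1) (mo (t - 1)) - L t (mo (t - 1))) - L t (lam t)‖
        ≤ ‖c • (L (t - 1) (mo (t - 1)) - L t (mo (t - 1)))‖ + ‖L t (lam t)‖ :=
          norm_sub_le _ _
      _ = c * ‖L (t - 1) (mo (t - 1)) - L t (mo (t - 1))‖ + ‖L t (lam t)‖ := by
          rw [norm_smul, Real.norm_eq_abs, abs_of_nonneg hc]
  have hcmp : ‖L (t - 1) (mo (t - 1)) - L t (mo (t - 1))‖ ≤ ‖L (t - 1) (mo (t - 1))‖ := by
    apply euclid_norm_le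
    intro i
    have hsub : (L (t - 1) (mo (t - 1)) - L t (mo (t - 1))) i
        = (a (t - 1) i - a t i) * mo (t - 1) i := by
      have : (L (t - 1) (mo (t - 1)) - L t (mo (t - 1))) i
          = L (t - 1) (mo (t - 1)) i - L t (mo (t - 1)) i := rfl
      rw [this, hL]; simp only [euclid_apply]; ring
    rw [hsub, hL]; simp only [euclid_apply]
    rw [Real.norm_eq_abs, Real.norm_eq_abs, abs_mul, abs_mul]
    apply mul_le_mul_of_nonneg_right _ (abs_nonneg _)
    rw [abs_of_nonneg (by linarith [ha_mono t ht1 i]), abs_of_nonneg (ha_nonneg (t-1) i)]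
    linarith [ha_nonneg t i]
  have hθn : ‖θ t - θ (t - 1)‖ = ‖L (t - 1) (mo (t - 1))‖ := by
    rw [hdiff, norm_neg]
  calc ‖z (t + 1) - z t‖
      ≤ c * ‖L (t - 1) (mo (t - 1)) - L t (mo (t - 1))‖ + ‖L t (lam t)‖ := hnorm1
    _ ≤ c * ‖L (t - 1) (mo (t - 1))‖ + ‖L t (lam t)‖ := by
        gcongr
    _ = c * ‖θ t - θ (t - 1)‖ + ‖L t (lam t)‖ := by rw [hθn]
end
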